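/- arXiv:2102.08880 — 7 statements merged into one kernel-verified Lean document; each statement's English description precedes it below -/
import Mathlib

section
/- Let 𝕏 ⊆ ℝⁿ and 𝕌 ⊆ ℝᵐ be nonempty compact sets, let C_i : ℝᵐ → ℝ and J : ℝⁿ → ℝ be continuous, let B be a real n×m matrix, f_s : ℝⁿ → ℝⁿ any map, let W ⊆ ℝⁿ be a finite nonempty set with p : W → ℝ satisfying p(w) ≥ 0 and Σ_{w∈W} p(w) = 1, and let γ > 0. Define ε(z) := γ · Σ_{w∈W} p(w) · J(z + w) and D := {z ∈ ℝⁿ : z + w ∈ 𝕏 for all w ∈ W}, and assume D is nonempty. Then for every x ∈ ℝⁿ and every y ∈ ℝⁿ, inf_{u ∈ 𝕌, z ∈ D} [ C_i(u) + ε(z) + ⟨y, f_s(x) + Bu − z⟩ ] = ⟨y, f_s(x)⟩ − C_i^{*𝕌}(−Bᵀy) − ε^{*D}(y). Consequently, in ℝ ∪ {+∞}, sup_{y ∈ ℝⁿ} inf_{u ∈ 𝕌, z ∈ D} [ C_i(u) + ε(z) + ⟨y, f_s(x) + Bu − z⟩ ] = sup_{y ∈ ℝⁿ} ( ⟨y,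 f_s(x)⟩ − φ(y) ), where φ(y) := C_i^{*𝕌}(−Bᵀy) + ε^{*D}(y). -/
open scoped RealInnerProductSpace

/-- Proposition 3.1: the Lagrangian dual of the DP minimization for input-affine dynamics
`x⁺ = f_s(x) + Bu + w` with separable stage cost can be written via conjugate transforms:
for every `x` and every dual variable `y`,
`inf_{u∈𝕌, z∈D} [C_i(u) + ε(z) + ⟨y, f_s(x)+Bu−z⟩] = ⟨y,f_s(x)⟩ − C_i^{*𝕌}(−Bᵀy) − ε^{*D}(y)`,
and consequently (in `ℝ ∪ {+∞}`) the dual optimal value equals `sup_y (⟨y,f_s(x)⟩ − φ(y))`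
with `φ(y) = C_i^{*𝕌}(−Bᵀy) + ε^{*D}(y)`. -/
theorem cdp_operator_conjugate_form {n m : ℕ}
    (X : Set (EuclideanSpace ℝ (Fin n))) (hXne : X.Nonempty) (hXc : IsCompact X)
    (U : Set (EuclideanSpace ℝ (Fin m))) (hUne : U.Nonempty) (hUc : IsCompact U)
    (Ci : EuclideanSpace ℝ (Fin m) → ℝ) (hCi : Continuous Ci)
    (J : EuclideanSpace ℝ (Fin n) → ℝ) (hJ : Continuous J)
    (B : EuclideanSpace ℝ (Fin m) →L[ℝ] EuclideanSpace ℝ (Fin n))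
    (fs : EuclideanSpace ℝ (Fin n) → EuclideanSpace ℝ (Fin n))
    (W : Finset (EuclideanSpace ℝ (Fin n))) (hWne : W.Nonempty)
    (p : EuclideanSpace ℝ (Fin n) → ℝ)
    (hp : ∀ w ∈ W, 0 ≤ p w) (hpsum : ∑ w ∈ W, p w = 1)
    (γ : ℝ) (hγ : 0 < γ)
    (ε : EuclideanSpace ℝ (Fin n) → ℝ)
    (hε : ∀ z, ε z = γ * ∑ w ∈ W, p w * J (z + w))
    (D : Set (EuclideanSpace ℝ (Fin n)))
    (hD : D = {z | ∀ w ∈ W, z + w ∈ X}) (hDne : D.Nonempty)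
    (x : EuclideanSpace ℝ (Fin n)) :
    (∀ y : EuclideanSpace ℝ (Fin n),
      sInf {c : ℝ | ∃ u ∈ U, ∃ z ∈ D, c = Ci u + ε z + ⟪y, fs x + B u - z⟫} =
        ⟪y, fs x⟫ - sSup ((fun u => ⟪u, -(ContinuousLinearMap.adjoint B) y⟫ - Ci u) '' U)
          - sSup ((fun z => ⟪z, y⟫ - ε z) '' D)) ∧
    (⨆ y : EuclideanSpace ℝ (Fin n),
        ((sInf {c : ℝ | ∃ u ∈ U, ∃ z ∈ D, c = Ci u + ε z + ⟪y, fs x + B u - z⟫} : ℝ) : EReal)) =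
      ⨆ y : EuclideanSpace ℝ (Fin n),
        ((⟪y, fs x⟫ - (sSup ((fun u => ⟪u, -(ContinuousLinearMap.adjoint B) y⟫ - Ci u) '' U)
            + sSup ((fun z => ⟪z, y⟫ - ε z) '' D)) : ℝ) : EReal) := by
  -- ε is continuous
  have hεc : Continuous ε := by
    have hfun : ε = fun z => γ * ∑ w ∈ W, p w * J (z + w) := funext hε
    rw [hfun]
    exact continuous_const.mul
      (continuous_finset_sum _ fun w _ =>
        continuous_const.mul (hJ.comp (continuous_id.add continuous_const)))
  -- D is compact
  obtain ⟨w₀, hw₀⟩ := hWne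
  have hDclosed : IsClosed D := by
    rw [hD]
    have : {z : EuclideanSpace ℝ (Fin n) | ∀ w ∈ W, z + w ∈ X} =
        ⋂ w ∈ W, (fun z => z + w) ⁻¹' X := by
      ext z; simp
    rw [this]
    exact isClosed_biInter fun w _ =>
      hXc.isClosed.preimage (continuous_id.add continuous_const)
  have hDc : IsCompact D := by
    have hsub : D ⊆ (fun z => z + w₀) ⁻¹' X := by
      intro z hz
      rw [hD] at hz
      exact hz w₀ hw₀
    have hpre : IsCompact ((fun z : EuclideanSpace ℝ (Fin n) => z + w₀) ⁻¹' X) := by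
      have := (Homeomorph.addRight w₀ :
        EuclideanSpace ℝ (Fin n) ≃ₜ EuclideanSpace ℝ (Fin n)).isCompact_preimage.mpr hXc
      exact this
    exact hpre.of_isClosed_subset hDclosed hsub
  have key : ∀ y : EuclideanSpace ℝ (Fin n),
      sInf {c : ℝ | ∃ u ∈ U, ∃ z ∈ D, c = Ci u + ε z + ⟪y, fs x + B u - z⟫} =
        ⟪y, fs x⟫ - sSup ((fun u => ⟪u, -(ContinuousLinearMap.adjoint B) y⟫ - Ci u) '' U)
          - sSup ((fun z => ⟪z, y⟫ - ε z) '' D) := by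
    intro y
    set f : EuclideanSpace ℝ (Fin m) → ℝ := fun u => Ci u + ⟪y, B u⟫ with hf
    set g : EuclideanSpace ℝ (Fin n) → ℝ := fun z => ε z - ⟪y, z⟫ with hg
    have hfc : Continuous f := hCi.add ((continuous_const.inner B.continuous))
    have hgc : Continuous g := hεc.sub (continuous_const.inner continuous_id)
    obtain ⟨u₀, hu₀U, hu₀⟩ := hUc.exists_isMinOn hUne hfc.continuousOn
    obtain ⟨z₀, hz₀D, hz₀⟩ := hDc.exists_isMinOn hDne hgc.continuousOn
    have hinner_u : ∀ u : EuclideanSpace ℝ (Fin m),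
        ⟪u, -(ContinuousLinearMap.adjoint B) y⟫ - Ci u = -(f u) := by
      intro u
      have h1 : ⟪(ContinuousLinearMap.adjoint B) y, u⟫ = ⟪y, B u⟫ :=
        ContinuousLinearMap.adjoint_inner_left B u y
      rw [inner_neg_right, real_inner_comm ((ContinuousLinearMap.adjoint B) y) u, h1]
      show _ = -(Ci u + ⟪y, B u⟫)
      ring
    have hinner_z : ∀ z : EuclideanSpace ℝ (Fin n),
        ⟪z, y⟫ - ε z = -(g z) := by
      intro z
      show _ = -(ε z - ⟪y, z⟫)
      rw [real_inner_comm y z]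
      ring
    -- compute the two sups
    have hsupU : sSup ((fun u => ⟪u, -(ContinuousLinearMap.adjoint B) y⟫ - Ci u) '' U)
        = -(f u₀) := by
      apply IsGreatest.csSup_eq
      constructor
      · exact ⟨u₀, hu₀U, hinner_u u₀⟩
      · rintro c ⟨u, huU, rfl⟩
        dsimp only
        rw [hinner_u u]
        have h2 : f u₀ ≤ f u := hu₀ huU
        linarith
    have hsupD : sSup ((fun z => ⟪z, y⟫ - ε z) '' D) = -(g z₀) := by
      apply IsGreatest.csSup_eq
      constructor
      · exact ⟨z₀, hz₀D, hinner_z z₀⟩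
      · rintro c ⟨z, hzD, rfl⟩
        dsimp only
        rw [hinner_z z]
        have h2 : g z₀ ≤ g z := hz₀ hzD
        linarith
    have hexpand : ∀ (u : EuclideanSpace ℝ (Fin m)) (z : EuclideanSpace ℝ (Fin n)),
        Ci u + ε z + ⟪y, fs x + B u - z⟫ = ⟪y, fs x⟫ + f u + g z := by
      intro u z
      show _ = ⟪y, fs x⟫ + (Ci u + ⟪y, B u⟫) + (ε z - ⟪y, z⟫)
      rw [inner_sub_right, inner_add_right]
      ring
    have hinf : sInf {c : ℝ | ∃ u ∈ U, ∃ z ∈ D, c = Ci u + ε z + ⟪y, fs x + B u - z⟫}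
        = ⟪y, fs x⟫ + f u₀ + g z₀ := by
      apply IsLeast.csInf_eq
      constructor
      · exact ⟨u₀, hu₀U, z₀, hz₀D, (hexpand u₀ z₀).symm⟩
      · rintro c ⟨u, huU, z, hzD, rfl⟩
        rw [hexpand u z]
        have h1 := hu₀ huU
        have h2 := hz₀ hzD
        have h1' : f u₀ ≤ f u := h1
        have h2' : g z₀ ≤ g z := h2
        linarith
    rw [hinf, hsupU, hsupD]
    ring
  refine ⟨key, ?_⟩
  apply congrArg
  funext y
  congr 1
  rw [key y]
  ring
end

section
/- Let 𝕏 ⊆ ℝⁿ and 𝕌 ⊆ ℝᵐ be nonempty compact sets, let C_i : ℝᵐ → ℝ and J : ℝⁿ → ℝ be Lipschitz continuous, let B be a real n×m matrix, f_s : ℝⁿ → ℝⁿ any map, let W ⊆ ℝⁿ be a finite nonempty set with p : W → ℝ satisfying p(w) ≥ 0 and Σ_{w∈W} p(w) = 1, and let γ > 0. Define ε(z) := γ · Σ_{w∈W} p(w) · J(z + w) and D := {z ∈ ℝⁿ : z + w ∈ 𝕏 for all w ∈ W}, assumed nonempty. Fix x ∈ ℝⁿ and assume feasibility: there exists u ∈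 𝕌 with f_s(x) + Bu ∈ D. Define the biconjugates C_i^{**}(u) := sup_{v ∈ ℝᵐ} (⟨u, v⟩ − C_i^{*𝕌}(v)) and ε^{**}(z) := sup_{y ∈ ℝⁿ} (⟨y, z⟩ − ε^{*D}(y)), with values in ℝ ∪ {+∞}. Then sup_{y ∈ ℝⁿ} [ ⟨y, f_s(x)⟩ − C_i^{*𝕌}(−Bᵀy) − ε^{*D}(y) ] = inf_{u ∈ co(𝕌)} [ C_i^{**}(u) + ε^{**}(f_s(x) + Bu) ], both sides are finite, and the infimum over the convex hull co(𝕌) is attained. -/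
/-!
On `co 𝕌` the biconjugate `C**` is finite, equal to the real conjugate of `C^{*𝕌}`, convex and
lower semicontinuous, and `C**(u) + ε**(f_s(x) + Bu) ≤ sup_y L(u, y)` for the Lagrangian
`L(u, y) = C**(u) + ⟨f_s(x) + Bu, y⟩ − ε^{*D}(y)`, which is convex and lsc in `u` on the compact
convex set `co 𝕌` (compact by Carathéodory) and concave and usc in `y`. Sion's minimax theorem
exchanges `inf_u` and `sup_y`, and evaluating `L(·, y)` at an input `u ∈ 𝕌` that attains
`C^{*𝕌}(−Bᵀy)` shows `inf_u L(u, y)` is at most the CDP objective at `y`; Fenchel–Young gives the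
reverse inequality. The common value lies between the CDP objective at `y = 0` and the DP
objective at a feasible input, and the infimum is attained because the biconjugates, as suprema
of affine functions, are lower semicontinuous and never `⊥`.
-/

open scoped RealInnerProductSpace

/-- The conjugate of `h` over the set `S`: `h^{*S}(y) = sup_{x ∈ S} (⟨x,y⟩ − h(x))`. -/
noncomputable def conjOn {k : ℕ} (S : Set (EuclideanSpace ℝ (Fin k)))
    (h : EuclideanSpace ℝ (Fin k) → ℝ) (y : EuclideanSpace ℝ (Fin k)) : ℝ :=
  sSup ((fun x => ⟪x, y⟫ - h x) '' S)

/-- The biconjugate of `h` (conjugate taken over `S`), with values in `ℝ ∪ {+∞}`: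
`h^{**}(u) = sup_{v} (⟨u,v⟩ − h^{*S}(v))`. -/
noncomputable def biconjOn {k : ℕ} (S : Set (EuclideanSpace ℝ (Fin k)))
    (h : EuclideanSpace ℝ (Fin k) → ℝ) (u : EuclideanSpace ℝ (Fin k)) : EReal :=
  ⨆ v : EuclideanSpace ℝ (Fin k), ((⟪u, v⟫ - conjOn S h v : ℝ) : EReal)

open Set

theorem convexHull_range_eq_image_stdSimplex {ι E : Type*} [Fintype ι] [AddCommGroup E]
    [Module ℝ E] (g : ι → E) :
    convexHull ℝ (range g) = (fun w : ι → ℝ => ∑ i, w i • g i) '' stdSimplex ℝ ι := by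
  classical
  have hL : (fun w : ι → ℝ => ∑ i, w i • g i) = Fintype.linearCombination ℝ g := by
    ext w; simp [Fintype.linearCombination_apply]
  rw [← convexHull_basis_eq_stdSimplex, hL, LinearMap.image_convexHull, ← range_comp]
  congr 2
  ext i
  simp [Fintype.linearCombination_apply, ite_smul]

theorem IsCompact.convexHull {E : Type*} [AddCommGroup E] [Module ℝ E] [FiniteDimensional ℝ E]
    [TopologicalSpace E] [IsTopologicalAddGroup E] [ContinuousSMul ℝ E] {s : Set E}
    (hs : IsCompact s) : IsCompact (_root_.convexHull ℝ s) := by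
  set N := Module.finrank ℝ E + 1
  suffices _root_.convexHull ℝ s =
      (fun p : (Fin N → ℝ) × (Fin N → E) => ∑ i, p.1 i • p.2 i) ''
        (stdSimplex ℝ (Fin N) ×ˢ univ.pi fun _ => s) by
    rw [this]
    exact ((isCompact_stdSimplex ℝ _).prod (isCompact_univ_pi fun _ => hs)).image (by fun_prop)
  refine Subset.antisymm (fun x hx => ?_) ?_
  · rw [convexHull_eq_union] at hx
    simp only [mem_iUnion] at hx
    obtain ⟨t, hts, ht, hxt⟩ := hx
    have : Nonempty t := (convexHull_nonempty_iff.1 ⟨x, hxt⟩).to_subtype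
    obtain ⟨e⟩ : Nonempty (t ↪ Fin N) := Function.Embedding.nonempty_of_card_le
      (by simpa using ht.card_le_finrank_succ.trans (Nat.succ_le_succ (Submodule.finrank_le _)))
    have htg : (t : Set E) ⊆ range fun j => ((Function.invFun e j : t) : E) := fun a ha =>
      ⟨e ⟨a, ha⟩, by simp [Function.leftInverse_invFun e.injective _]⟩
    obtain ⟨w, hw, rfl⟩ := (convexHull_range_eq_image_stdSimplex _).subset (convexHull_mono htg hxt)
    exact ⟨(w, _), ⟨hw, fun j _ => hts (Function.invFun e j).2⟩, rfl⟩
  · rintro - ⟨⟨w, g⟩, ⟨hw, hg⟩, rfl⟩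
    exact (convexHull_mono (range_subset_iff.2 fun i => hg i (mem_univ i)))
      ((convexHull_range_eq_image_stdSimplex g).superset ⟨w, hw, rfl⟩)

theorem isCompact_setOf_forall_add_mem {G : Type*} [AddGroup G] [TopologicalSpace G]
    [IsTopologicalAddGroup G] [T2Space G] {X W : Set G} (hX : IsCompact X) (hW : W.Nonempty) :
    IsCompact {z | ∀ w ∈ W, z + w ∈ X} := by
  obtain ⟨w₀, hw₀⟩ := hW
  have hclosed : IsClosed {z | ∀ w ∈ W, z + w ∈ X} := by
    simp only [ofPred_forall]
    exact isClosed_biInter fun w _ => hX.isClosed.preimage (continuous_add_const w)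
  exact ((Homeomorph.addRight w₀).isCompact_preimage.2 hX).of_isClosed_subset hclosed
    fun z hz => hz w₀ hw₀

lemma EReal.coe_add_iSup_le {ι : Sort*} (c : ℝ) (b : ι → EReal) :
    (c : EReal) + ⨆ i, b i ≤ ⨆ i, ((c : EReal) + b i) := by
  rw [add_comm, ← EReal.le_sub_iff_add_le (.inl (EReal.coe_ne_bot c)) (.inl (EReal.coe_ne_top c))]
  refine iSup_le fun i => (EReal.le_sub_iff_add_le (.inl (EReal.coe_ne_bot c))
    (.inl (EReal.coe_ne_top c))).2 ?_
  rw [add_comm]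
  exact le_iSup (fun i => (c : EReal) + b i) i

section Conjugate

variable {k : ℕ} {S : Set (EuclideanSpace ℝ (Fin k))} {h : EuclideanSpace ℝ (Fin k) → ℝ}

lemma conjOn_eq_ciSup (S : Set (EuclideanSpace ℝ (Fin k))) (h : EuclideanSpace ℝ (Fin k) → ℝ)
    (y : EuclideanSpace ℝ (Fin k)) :
    conjOn S h y = ⨆ x : S, (⟪(x : EuclideanSpace ℝ (Fin k)), y⟫ - h x) := by
  rw [conjOn, sSup_image']

lemma bddAbove_image_inner_sub (hS : IsCompact S) (hh : ContinuousOn h S)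
    (y : EuclideanSpace ℝ (Fin k)) : BddAbove ((fun x => ⟪x, y⟫ - h x) '' S) :=
  hS.bddAbove_image (by fun_prop)

lemma le_conjOn (hS : IsCompact S) (hh : ContinuousOn h S) {x : EuclideanSpace ℝ (Fin k)}
    (hx : x ∈ S) (y : EuclideanSpace ℝ (Fin k)) : ⟪x, y⟫ - h x ≤ conjOn S h y :=
  le_csSup (bddAbove_image_inner_sub hS hh y) (mem_image_of_mem _ hx)

lemma conjOn_le (hSne : S.Nonempty) {y : EuclideanSpace ℝ (Fin k)} {c : ℝ}
    (hc : ∀ x ∈ S, ⟪x, y⟫ - h x ≤ c) : conjOn S h y ≤ c :=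
  csSup_le (hSne.image _) (forall_mem_image.2 hc)

lemma exists_conjOn_eq (hSne : S.Nonempty) (hS : IsCompact S) (hh : ContinuousOn h S)
    (y : EuclideanSpace ℝ (Fin k)) : ∃ x ∈ S, conjOn S h y = ⟪x, y⟫ - h x := by
  obtain ⟨x, hx, hmax⟩ := hS.exists_isMaxOn hSne (f := fun x => ⟪x, y⟫ - h x) (by fun_prop)
  exact ⟨x, hx, (conjOn_le hSne hmax).antisymm (le_conjOn hS hh hx y)⟩

lemma convexOn_conjOn {T : Set (EuclideanSpace ℝ (Fin k))} (hT : Convex ℝ T) (hSne : S.Nonempty)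
    (hbdd : ∀ y ∈ T, BddAbove ((fun x => ⟪x, y⟫ - h x) '' S)) : ConvexOn ℝ T (conjOn S h) := by
  refine ⟨hT, fun y₁ hy₁ y₂ hy₂ a b ha hb hab => conjOn_le hSne fun x hx => ?_⟩
  have h₁ := mul_le_mul_of_nonneg_left (le_csSup (hbdd y₁ hy₁) (mem_image_of_mem _ hx)) ha
  have h₂ := mul_le_mul_of_nonneg_left (le_csSup (hbdd y₂ hy₂) (mem_image_of_mem _ hx)) hb
  have : ⟪x, a • y₁ + b • y₂⟫ - h x = a * (⟪x, y₁⟫ - h x) + b * (⟪x, y₂⟫ - h x) := by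
    rw [inner_add_right, real_inner_smul_right, real_inner_smul_right]
    linear_combination h x * hab
  rw [this, smul_eq_mul, smul_eq_mul]
  exact add_le_add h₁ h₂

lemma lowerSemicontinuousOn_conjOn {T : Set (EuclideanSpace ℝ (Fin k))}
    (hbdd : ∀ y ∈ T, BddAbove ((fun x => ⟪x, y⟫ - h x) '' S)) :
    LowerSemicontinuousOn (conjOn S h) T := by
  simp_rw [funext (conjOn_eq_ciSup S h)]
  refine lowerSemicontinuousOn_ciSup (fun y hy => ?_) fun x =>
    (by fun_prop : Continuous _).lowerSemicontinuous.lowerSemicontinuousOn _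
  simpa [image_eq_range] using hbdd y hy

lemma coe_le_biconjOn (u v : EuclideanSpace ℝ (Fin k)) :
    ((⟪u, v⟫ - conjOn S h v : ℝ) : EReal) ≤ biconjOn S h u :=
  le_iSup (fun v => ((⟪u, v⟫ - conjOn S h v : ℝ) : EReal)) v

lemma biconjOn_ne_bot (u : EuclideanSpace ℝ (Fin k)) : biconjOn S h u ≠ ⊥ :=
  ne_bot_of_le_ne_bot (EReal.coe_ne_bot _) (coe_le_biconjOn u 0)

lemma lowerSemicontinuous_biconjOn : LowerSemicontinuous (biconjOn S h) :=
  lowerSemicontinuous_iSup fun v =>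
    (continuous_coe_real_ereal.comp (by fun_prop)).lowerSemicontinuous

/-- The half-space `{w | ⟪v, w⟫ ≤ conjOn S h v + sup h(S)}` is convex and contains `S`, hence
`convexHull ℝ S`. -/
lemma bddAbove_image_inner_sub_conjOn (hS : IsCompact S) (hh : ContinuousOn h S)
    {u : EuclideanSpace ℝ (Fin k)} (hu : u ∈ convexHull ℝ S) :
    BddAbove ((fun v => ⟪v, u⟫ - conjOn S h v) '' univ) := by
  obtain ⟨M, hM⟩ := hS.bddAbove_image hh
  refine ⟨M, forall_mem_image.2 fun v _ => ?_⟩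
  have hS_sub : S ⊆ {w | innerₗ _ v w ≤ conjOn S h v + M} := fun w hw => by
    have := le_conjOn hS hh hw v
    have := hM (mem_image_of_mem h hw)
    have := real_inner_comm v w
    simp only [mem_ofPred_eq, innerₗ_apply_apply]
    linarith
  have := convexHull_min hS_sub (convex_halfSpace_le (innerₗ _ v).isLinear _) hu
  simp only [mem_ofPred_eq, innerₗ_apply_apply] at this
  linarith

lemma biconjOn_eq_coe_conjOn_conjOn (hS : IsCompact S) (hh : ContinuousOn h S)
    {u : EuclideanSpace ℝ (Fin k)} (hu : u ∈ convexHull ℝ S) :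
    biconjOn S h u = conjOn univ (conjOn S h) u := by
  have hbdd := bddAbove_image_inner_sub_conjOn hS hh hu
  rw [image_univ] at hbdd
  rw [conjOn, image_univ, sSup_range, Monotone.map_ciSup_of_continuousAt
    continuous_coe_real_ereal.continuousAt EReal.coe_strictMono.monotone hbdd, biconjOn]
  simp_rw [real_inner_comm u]

lemma conjOn_conjOn_le (hS : IsCompact S) (hh : ContinuousOn h S) {x : EuclideanSpace ℝ (Fin k)}
    (hx : x ∈ S) : conjOn univ (conjOn S h) x ≤ h x :=
  conjOn_le univ_nonempty fun v _ => by
    have := le_conjOn hS hh hx v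
    rw [real_inner_comm]
    linarith

end Conjugate

section Duality

variable {m n : ℕ} {U : Set (EuclideanSpace ℝ (Fin m))} {c : EuclideanSpace ℝ (Fin m) → ℝ}
  {D : Set (EuclideanSpace ℝ (Fin n))} {e : EuclideanSpace ℝ (Fin n) → ℝ}
  {B : EuclideanSpace ℝ (Fin m) →L[ℝ] EuclideanSpace ℝ (Fin n)} {a : EuclideanSpace ℝ (Fin n)}

-- With `a = f_s(x)`: the objective of the CDP operator, and that of the DP operator with `C` and
-- `ε` replaced by their biconjugates.
variable (U c D e B a) in
noncomputable def dualObjective (y : EuclideanSpace ℝ (Fin n)) : ℝ :=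
  ⟪y, a⟫ - conjOn U c (-(ContinuousLinearMap.adjoint B) y) - conjOn D e y

variable (U c D e B a) in
noncomputable def primalObjective (u : EuclideanSpace ℝ (Fin m)) : EReal :=
  biconjOn U c u + biconjOn D e (a + B u)

variable (U c D e B a) in
noncomputable def lagrangian (u : EuclideanSpace ℝ (Fin m)) (y : EuclideanSpace ℝ (Fin n)) : ℝ :=
  conjOn univ (conjOn U c) u + ⟪a + B u, y⟫ - conjOn D e y

lemma dualObjective_le_primalObjective (y : EuclideanSpace ℝ (Fin n))
    (u : EuclideanSpace ℝ (Fin m)) :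
    (dualObjective U c D e B a y : EReal) ≤ primalObjective U c D e B a u := by
  have hsplit : dualObjective U c D e B a y =
      (⟪u, -(ContinuousLinearMap.adjoint B) y⟫ - conjOn U c (-(ContinuousLinearMap.adjoint B) y))
        + (⟪a + B u, y⟫ - conjOn D e y) := by
    rw [dualObjective, inner_neg_right, ContinuousLinearMap.adjoint_inner_right, inner_add_left,
      real_inner_comm a]
    ring
  rw [hsplit, EReal.coe_add]
  exact add_le_add (coe_le_biconjOn _ _) (coe_le_biconjOn _ _)

lemma primalObjective_le_iSup_lagrangian (hU : IsCompact U) (hc : ContinuousOn c U)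
    {u : EuclideanSpace ℝ (Fin m)} (hu : u ∈ convexHull ℝ U) :
    primalObjective U c D e B a u ≤ ⨆ y, (lagrangian U c D e B a u y : EReal) := by
  rw [primalObjective, biconjOn_eq_coe_conjOn_conjOn hU hc hu, biconjOn]
  refine (EReal.coe_add_iSup_le _ _).trans (iSup_mono fun y => ?_)
  rw [lagrangian, ← EReal.coe_add, add_sub_assoc]

lemma iInf_lagrangian_le_dualObjective (hU : IsCompact U) (hUne : U.Nonempty)
    (hc : ContinuousOn c U) (y : EuclideanSpace ℝ (Fin n)) :
    ⨅ u ∈ convexHull ℝ U, (lagrangian U c D e B a u y : EReal) ≤ dualObjective U c D e B a y := by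
  obtain ⟨u, hu, hconj⟩ := exists_conjOn_eq hUne hU hc (-(ContinuousLinearMap.adjoint B) y)
  refine (iInf₂_le u (subset_convexHull ℝ U hu)).trans (EReal.coe_le_coe_iff.2 ?_)
  have := conjOn_conjOn_le hU hc hu
  rw [lagrangian, dualObjective, hconj, inner_neg_right, ContinuousLinearMap.adjoint_inner_right,
    inner_add_left, real_inner_comm a]
  linarith

lemma lagrangian_eq_add_linear (u : EuclideanSpace ℝ (Fin m)) (y : EuclideanSpace ℝ (Fin n)) :
    lagrangian U c D e B a u y = conjOn univ (conjOn U c) u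
      + ((innerₗ _).flip y ∘ₗ B.toLinearMap) u + (⟪a, y⟫ - conjOn D e y) := by
  simp only [lagrangian, LinearMap.comp_apply, LinearMap.flip_apply, innerₗ_apply_apply,
    ContinuousLinearMap.coe_coe, inner_add_left]
  ring

lemma convexOn_lagrangian_left (hU : IsCompact U) (hc : ContinuousOn c U)
    (y : EuclideanSpace ℝ (Fin n)) :
    ConvexOn ℝ (convexHull ℝ U) fun u => lagrangian U c D e B a u y := by
  simp_rw [lagrangian_eq_add_linear]
  exact ((convexOn_conjOn (convex_convexHull ℝ U) univ_nonempty
    fun u hu => bddAbove_image_inner_sub_conjOn hU hc hu).add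
    (((innerₗ _).flip y ∘ₗ B.toLinearMap).convexOn (convex_convexHull ℝ U))).add_const _

lemma lowerSemicontinuousOn_lagrangian_left (hU : IsCompact U) (hc : ContinuousOn c U)
    (y : EuclideanSpace ℝ (Fin n)) :
    LowerSemicontinuousOn (fun u => lagrangian U c D e B a u y) (convexHull ℝ U) := by
  simp_rw [lagrangian, add_sub_assoc]
  exact (lowerSemicontinuousOn_conjOn fun u hu => bddAbove_image_inner_sub_conjOn hU hc hu).add
    ((by fun_prop : Continuous fun u => ⟪a + B u, y⟫ - conjOn D e y).lowerSemicontinuous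
      |>.lowerSemicontinuousOn _)

lemma concaveOn_lagrangian_right (hD : IsCompact D) (hDne : D.Nonempty) (he : ContinuousOn e D)
    (u : EuclideanSpace ℝ (Fin m)) : ConcaveOn ℝ univ (lagrangian U c D e B a u) := by
  unfold lagrangian
  simp_rw [add_comm (conjOn univ (conjOn U c) u)]
  exact ((innerₗ _ (a + B u)).concaveOn convex_univ |>.add_const _).sub
    (convexOn_conjOn convex_univ hDne fun y _ => bddAbove_image_inner_sub hD he y)

lemma upperSemicontinuousOn_lagrangian_right (hD : IsCompact D) (he : ContinuousOn e D)
    (u : EuclideanSpace ℝ (Fin m)) : UpperSemicontinuousOn (lagrangian U c D e B a u) univ := by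
  unfold lagrangian
  simp_rw [sub_eq_add_neg]
  have hconj : UpperSemicontinuousOn (fun y => -conjOn D e y) univ :=
    continuous_neg.comp_lowerSemicontinuousOn_antitone
      (lowerSemicontinuousOn_conjOn fun y _ => bddAbove_image_inner_sub hD he y)
      fun _ _ => neg_le_neg
  exact (by fun_prop : Continuous fun y => conjOn univ (conjOn U c) u + ⟪a + B u, y⟫)
    |>.upperSemicontinuous.upperSemicontinuousOn _ |>.add hconj

lemma iInf_iSup_lagrangian_eq_iSup_iInf (hU : IsCompact U) (hUne : U.Nonempty)
    (hc : ContinuousOn c U) (hD : IsCompact D) (hDne : D.Nonempty) (he : ContinuousOn e D) :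
    ⨅ u ∈ convexHull ℝ U, ⨆ y, (lagrangian U c D e B a u y : EReal) =
      ⨆ y, ⨅ u ∈ convexHull ℝ U, (lagrangian U c D e B a u y : EReal) := by
  have hmono : Monotone ((↑) : ℝ → EReal) := EReal.coe_strictMono.monotone
  simpa only [iSup_univ] using
    Sion.minimax' (f := fun u y => (lagrangian U c D e B a u y : EReal))
      (convexHull_nonempty_iff.2 hUne) (convex_convexHull ℝ U) hU.convexHull
      (fun y _ => continuous_coe_real_ereal.comp_lowerSemicontinuousOn
        (lowerSemicontinuousOn_lagrangian_left hU hc y) hmono)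
      (fun y _ => QuasiconvexOn.monotone_comp (g := ((↑) : ℝ → EReal)) hmono
        (convexOn_lagrangian_left hU hc y).quasiconvexOn)
      convex_univ
      (fun u _ => continuous_coe_real_ereal.comp_upperSemicontinuousOn
        (upperSemicontinuousOn_lagrangian_right hD he u) hmono)
      (fun u _ => QuasiconcaveOn.monotone_comp (g := ((↑) : ℝ → EReal)) hmono
        (concaveOn_lagrangian_right hD hDne he u).quasiconcaveOn)

theorem iSup_dualObjective_eq_iInf_primalObjective (hU : IsCompact U) (hUne : U.Nonempty)
    (hc : ContinuousOn c U) (hD : IsCompact D) (hDne : D.Nonempty) (he : ContinuousOn e D) :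
    ⨆ y, (dualObjective U c D e B a y : EReal) =
      ⨅ u ∈ convexHull ℝ U, primalObjective U c D e B a u := by
  refine le_antisymm (iSup_le fun y => le_iInf₂ fun u _ => dualObjective_le_primalObjective y u) ?_
  calc ⨅ u ∈ convexHull ℝ U, primalObjective U c D e B a u
      ≤ ⨅ u ∈ convexHull ℝ U, ⨆ y, (lagrangian U c D e B a u y : EReal) :=
        iInf₂_mono fun u hu => primalObjective_le_iSup_lagrangian hU hc hu
    _ = ⨆ y, ⨅ u ∈ convexHull ℝ U, (lagrangian U c D e B a u y : EReal) :=
        iInf_iSup_lagrangian_eq_iSup_iInf hU hUne hc hD hDne he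
    _ ≤ ⨆ y, (dualObjective U c D e B a y : EReal) :=
        iSup_mono fun y => iInf_lagrangian_le_dualObjective hU hUne hc y

theorem exists_iSup_dualObjective_eq_coe (hU : IsCompact U) (hc : ContinuousOn c U)
    (hD : IsCompact D) (he : ContinuousOn e D) (hfeas : ∃ u ∈ U, a + B u ∈ D) :
    ∃ r : ℝ, ⨆ y, (dualObjective U c D e B a y : EReal) = r := by
  obtain ⟨u, hu, hau⟩ := hfeas
  have hub : ⨆ y, (dualObjective U c D e B a y : EReal) ≤
      (conjOn univ (conjOn U c) u + conjOn univ (conjOn D e) (a + B u) : ℝ) := by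
    rw [EReal.coe_add, ← biconjOn_eq_coe_conjOn_conjOn hU hc (subset_convexHull ℝ U hu),
      ← biconjOn_eq_coe_conjOn_conjOn hD he (subset_convexHull ℝ D hau)]
    exact iSup_le fun y => dualObjective_le_primalObjective y u
  have hlb := le_iSup (fun y => (dualObjective U c D e B a y : EReal)) 0
  exact ⟨_, (EReal.coe_toReal (ne_top_of_le_ne_top (EReal.coe_ne_top _) hub)
    (ne_bot_of_le_ne_bot (EReal.coe_ne_bot _) hlb)).symm⟩

theorem exists_primalObjective_eq_iInf (hU : IsCompact U) (hUne : U.Nonempty) :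
    ∃ u₀ ∈ convexHull ℝ U,
      primalObjective U c D e B a u₀ = ⨅ u ∈ convexHull ℝ U, primalObjective U c D e B a u := by
  have hlsc : LowerSemicontinuous (primalObjective U c D e B a) :=
    lowerSemicontinuous_biconjOn.add' (lowerSemicontinuous_biconjOn.comp (by fun_prop))
      fun u => EReal.continuousAt_add (.inr (biconjOn_ne_bot _)) (.inl (biconjOn_ne_bot _))
  obtain ⟨u₀, hu₀, hmin⟩ := hlsc.lowerSemicontinuousOn _ |>.exists_isMinOn
    (convexHull_nonempty_iff.2 hUne) hU.convexHull
  exact ⟨u₀, hu₀, le_antisymm (le_iInf₂ fun u hu => hmin hu) (iInf₂_le u₀ hu₀)⟩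

end Duality

theorem cdp_biconjugate_reformulation_general {n m : ℕ}
    (X : Set (EuclideanSpace ℝ (Fin n))) (hXc : IsCompact X)
    (U : Set (EuclideanSpace ℝ (Fin m))) (hUne : U.Nonempty) (hUc : IsCompact U)
    (Ci : EuclideanSpace ℝ (Fin m) → ℝ) (KCi : NNReal) (hCi : LipschitzWith KCi Ci)
    (J : EuclideanSpace ℝ (Fin n) → ℝ) (KJ : NNReal) (hJ : LipschitzWith KJ J)
    (B : EuclideanSpace ℝ (Fin m) →L[ℝ] EuclideanSpace ℝ (Fin n))
    (fs : EuclideanSpace ℝ (Fin n) → EuclideanSpace ℝ (Fin n))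
    (W : Finset (EuclideanSpace ℝ (Fin n))) (hWne : W.Nonempty)
    (p : EuclideanSpace ℝ (Fin n) → ℝ)
    (γ : ℝ)
    (ε : EuclideanSpace ℝ (Fin n) → ℝ)
    (hε : ∀ z, ε z = γ * ∑ w ∈ W, p w * J (z + w))
    (D : Set (EuclideanSpace ℝ (Fin n)))
    (hD : D = {z | ∀ w ∈ W, z + w ∈ X})
    (x : EuclideanSpace ℝ (Fin n))
    (hfeas : ∃ u ∈ U, fs x + B u ∈ D) :
    (⨆ y : EuclideanSpace ℝ (Fin n),
        ((⟪y, fs x⟫ - conjOn U Ci (-(ContinuousLinearMap.adjoint B) y) - conjOn D ε y : ℝ) :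
          EReal)) =
      (⨅ u ∈ convexHull ℝ U, (biconjOn U Ci u + biconjOn D ε (fs x + B u))) ∧
    (∃ r : ℝ,
      (⨆ y : EuclideanSpace ℝ (Fin n),
        ((⟪y, fs x⟫ - conjOn U Ci (-(ContinuousLinearMap.adjoint B) y) - conjOn D ε y : ℝ) :
          EReal)) = (r : EReal)) ∧
    ∃ u₀ ∈ convexHull ℝ U,
      biconjOn U Ci u₀ + biconjOn D ε (fs x + B u₀) =
        ⨅ u ∈ convexHull ℝ U, (biconjOn U Ci u + biconjOn D ε (fs x + B u)) := by
  have hDc : IsCompact D := hD ▸ isCompact_setOf_forall_add_mem hXc hWne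
  have hDne : D.Nonempty := let ⟨_, _, h⟩ := hfeas; ⟨_, h⟩
  have hCic : ContinuousOn Ci U := hCi.continuous.continuousOn
  have hεc : ContinuousOn ε D := by
    rw [funext hε]
    have := hJ.continuous
    fun_prop
  exact ⟨iSup_dualObjective_eq_iInf_primalObjective hUc hUne hCic hDc hDne hεc,
    exists_iSup_dualObjective_eq_coe hUc hCic hDc hεc hfeas,
    exists_primalObjective_eq_iInf hUc hUne⟩

/-- Proposition 3.2: the conjugate DP operator equals the DP operator with the input cost
and the expected value function replaced by their biconjugates; both sides are finite and
the infimum over the convex hull of `𝕌` is attained. -/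
theorem cdp_biconjugate_reformulation {n m : ℕ}
    (X : Set (EuclideanSpace ℝ (Fin n))) (hXne : X.Nonempty) (hXc : IsCompact X)
    (U : Set (EuclideanSpace ℝ (Fin m))) (hUne : U.Nonempty) (hUc : IsCompact U)
    (Ci : EuclideanSpace ℝ (Fin m) → ℝ) (KCi : NNReal) (hCi : LipschitzWith KCi Ci)
    (J : EuclideanSpace ℝ (Fin n) → ℝ) (KJ : NNReal) (hJ : LipschitzWith KJ J)
    (B : EuclideanSpace ℝ (Fin m) →L[ℝ] EuclideanSpace ℝ (Fin n))
    (fs : EuclideanSpace ℝ (Fin n) → EuclideanSpace ℝ (Fin n))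
    (W : Finset (EuclideanSpace ℝ (Fin n))) (hWne : W.Nonempty)
    (p : EuclideanSpace ℝ (Fin n) → ℝ)
    (hp : ∀ w ∈ W, 0 ≤ p w) (hpsum : ∑ w ∈ W, p w = 1)
    (γ : ℝ) (hγ : 0 < γ)
    (ε : EuclideanSpace ℝ (Fin n) → ℝ)
    (hε : ∀ z, ε z = γ * ∑ w ∈ W, p w * J (z + w))
    (D : Set (EuclideanSpace ℝ (Fin n)))
    (hD : D = {z | ∀ w ∈ W, z + w ∈ X}) (hDne : D.Nonempty)
    (x : EuclideanSpace ℝ (Fin n))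
    (hfeas : ∃ u ∈ U, fs x + B u ∈ D) :
    (⨆ y : EuclideanSpace ℝ (Fin n),
        ((⟪y, fs x⟫ - conjOn U Ci (-(ContinuousLinearMap.adjoint B) y) - conjOn D ε y : ℝ) :
          EReal)) =
      (⨅ u ∈ convexHull ℝ U, (biconjOn U Ci u + biconjOn D ε (fs x + B u))) ∧
    (∃ r : ℝ,
      (⨆ y : EuclideanSpace ℝ (Fin n),
        ((⟪y, fs x⟫ - conjOn U Ci (-(ContinuousLinearMap.adjoint B) y) - conjOn D ε y : ℝ) :
          EReal)) = (r : EReal)) ∧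
    ∃ u₀ ∈ convexHull ℝ U,
      biconjOn U Ci u₀ + biconjOn D ε (fs x + B u₀) =
        ⨅ u ∈ convexHull ℝ U, (biconjOn U Ci u + biconjOn D ε (fs x + B u)) :=
  cdp_biconjugate_reformulation_general X hXc U hUne hUc Ci KCi hCi J KJ hJ B fs W hWne p γ ε hε D
    hD x hfeas
end

section
/- Let 𝕏 ⊆ ℝⁿ and 𝕌 ⊆ ℝᵐ be nonempty compact convex sets, let C_i : ℝᵐ → ℝ be continuous and convex on 𝕌, let J : ℝⁿ → ℝ be continuous and convex on 𝕏, let B be a real n×m matrix, f_s : ℝⁿ → ℝⁿ any map, let W ⊆ ℝⁿ be a finite nonempty set with p : W → ℝ satisfying p(w) ≥ 0 and Σ_{w∈W} p(w) = 1, and let γ > 0. Define ε(z) := γ · Σ_{w∈W} p(w) · J(z + w) and D := {z ∈ ℝⁿ : z + w ∈ 𝕏 for all w ∈ W}, assumed nonempty. Fix x ∈ ℝⁿ and assume there exists u ∈ 𝕌 with f_s(x) + Bu ∈ D. Then strong duality holds: sup_{y ∈ ℝⁿ} [ ⟨y, f_s(x)⟩ − C_i^{*𝕌}(−Bᵀy)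 − ε^{*D}(y) ] = min { C_i(u) + γ · Σ_{w∈W} p(w) · J(f_s(x) + Bu + w) : u ∈ 𝕌, f_s(x) + Bu ∈ D }, and the minimum is attained. -/
open scoped RealInnerProductSpace Pointwise

/-- The conjugate over a compact set is attained and is an upper bound. -/
lemma conjOn_eq_max {k : ℕ} {S : Set (EuclideanSpace ℝ (Fin k))}
    (hSc : IsCompact S) (hSne : S.Nonempty)
    {h : EuclideanSpace ℝ (Fin k) → ℝ} (hh : Continuous h)
    (y : EuclideanSpace ℝ (Fin k)) :
    ∃ x₁ ∈ S, conjOn S h y = ⟪x₁, y⟫ - h x₁ ∧ ∀ x ∈ S, ⟪x, y⟫ - h x ≤ conjOn S h y := by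
  have hcont : Continuous fun x : EuclideanSpace ℝ (Fin k) => ⟪x, y⟫ - h x :=
    (continuous_id.inner continuous_const).sub hh
  obtain ⟨x₁, hx₁S, hmax⟩ := hSc.exists_isMaxOn hSne hcont.continuousOn
  have heq : conjOn S h y = ⟪x₁, y⟫ - h x₁ := by
    apply IsGreatest.csSup_eq
    exact ⟨⟨x₁, hx₁S, rfl⟩, by rintro r ⟨x, hx, rfl⟩; exact hmax hx⟩
  exact ⟨x₁, hx₁S, heq, fun x hx => heq ▸ hmax hx⟩

set_option maxHeartbeats 1000000 in
/-- Corollary 3.3: under convexity of the input cost and the value function, strong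
duality holds: the conjugate DP value equals the primal DP minimum, which is attained. -/
theorem cdp_strong_duality {n m : ℕ}
    (X : Set (EuclideanSpace ℝ (Fin n))) (hXne : X.Nonempty) (hXc : IsCompact X)
    (hXconv : Convex ℝ X)
    (U : Set (EuclideanSpace ℝ (Fin m))) (hUne : U.Nonempty) (hUc : IsCompact U)
    (hUconv : Convex ℝ U)
    (Ci : EuclideanSpace ℝ (Fin m) → ℝ) (hCi : Continuous Ci) (hCiconv : ConvexOn ℝ U Ci)
    (J : EuclideanSpace ℝ (Fin n) → ℝ) (hJ : Continuous J) (hJconv : ConvexOn ℝ X J)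
    (B : EuclideanSpace ℝ (Fin m) →L[ℝ] EuclideanSpace ℝ (Fin n))
    (fs : EuclideanSpace ℝ (Fin n) → EuclideanSpace ℝ (Fin n))
    (W : Finset (EuclideanSpace ℝ (Fin n))) (hWne : W.Nonempty)
    (p : EuclideanSpace ℝ (Fin n) → ℝ)
    (hp : ∀ w ∈ W, 0 ≤ p w) (hpsum : ∑ w ∈ W, p w = 1)
    (γ : ℝ) (hγ : 0 < γ)
    (ε : EuclideanSpace ℝ (Fin n) → ℝ)
    (hε : ∀ z, ε z = γ * ∑ w ∈ W, p w * J (z + w))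
    (D : Set (EuclideanSpace ℝ (Fin n)))
    (hD : D = {z | ∀ w ∈ W, z + w ∈ X}) (hDne : D.Nonempty)
    (x : EuclideanSpace ℝ (Fin n))
    (hfeas : ∃ u ∈ U, fs x + B u ∈ D) :
    ∃ u₀, u₀ ∈ U ∧ fs x + B u₀ ∈ D ∧
      (∀ u ∈ U, fs x + B u ∈ D →
        Ci u₀ + γ * ∑ w ∈ W, p w * J (fs x + B u₀ + w) ≤
          Ci u + γ * ∑ w ∈ W, p w * J (fs x + B u + w)) ∧
      (⨆ y : EuclideanSpace ℝ (Fin n),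
          ((⟪y, fs x⟫ - conjOn U Ci (-(ContinuousLinearMap.adjoint B) y) - conjOn D ε y : ℝ) :
            EReal)) =
        ((Ci u₀ + γ * ∑ w ∈ W, p w * J (fs x + B u₀ + w) : ℝ) : EReal) := by
  classical
  set v := fs x with hv
  -- basic properties of D
  have hDclosed : IsClosed D := by
    rw [hD]
    have h1 : {z : EuclideanSpace ℝ (Fin n) | ∀ w ∈ W, z + w ∈ X} =
        ⋂ w ∈ W, (fun z => z + w) ⁻¹' X := by
      ext z; simp
    rw [h1]
    exact isClosed_biInter fun w _ =>
      hXc.isClosed.preimage (continuous_id.add continuous_const)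
  obtain ⟨w₀, hw₀⟩ := hWne
  have hDcomp : IsCompact D := by
    have himg : IsCompact ((fun z : EuclideanSpace ℝ (Fin n) => z - w₀) '' X) :=
      hXc.image (continuous_id.sub continuous_const)
    refine himg.of_isClosed_subset hDclosed ?_
    intro z hz
    rw [hD] at hz
    exact ⟨z + w₀, hz w₀ hw₀, add_sub_cancel_right _ _⟩
  have hDconv : Convex ℝ D := by
    rw [hD]
    intro z₁ h₁ z₂ h₂ a b ha hb hab
    intro w hw
    have hwcomb : a • z₁ + b • z₂ + w = a • (z₁ + w) + b • (z₂ + w) :=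
      calc a • z₁ + b • z₂ + w = a • z₁ + b • z₂ + (a + b) • w := by rw [hab, one_smul]
        _ = a • (z₁ + w) + b • (z₂ + w) := by rw [add_smul, smul_add, smul_add]; abel
    rw [hwcomb]
    exact hXconv (h₁ w hw) (h₂ w hw) ha hb hab
  -- ε properties
  have hεcont : Continuous ε := by
    have hfe : ε = fun z => γ * ∑ w ∈ W, p w * J (z + w) := funext hε
    rw [hfe]
    exact continuous_const.mul (continuous_finset_sum _ fun w _ =>
      continuous_const.mul (hJ.comp (continuous_id.add continuous_const)))
  have hεconv : ConvexOn ℝ D ε := by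
    refine ⟨hDconv, fun z₁ h₁ z₂ h₂ a b ha hb hab => ?_⟩
    have h₁' := hD ▸ h₁
    have h₂' := hD ▸ h₂
    rw [hε, hε, hε]
    have key : ∀ w ∈ W, p w * J (a • z₁ + b • z₂ + w) ≤
        p w * (a * J (z₁ + w) + b * J (z₂ + w)) := by
      intro w hw
      have hwcomb : a • z₁ + b • z₂ + w = a • (z₁ + w) + b • (z₂ + w) :=
        calc a • z₁ + b • z₂ + w = a • z₁ + b • z₂ + (a + b) • w := by rw [hab, one_smul]
          _ = a • (z₁ + w) + b • (z₂ + w) := by rw [add_smul, smul_add, smul_add]; abel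
      refine mul_le_mul_of_nonneg_left ?_ (hp w hw)
      rw [hwcomb]
      have := hJconv.2 (h₁' w hw) (h₂' w hw) ha hb hab
      simpa [smul_eq_mul] using this
    calc γ * ∑ w ∈ W, p w * J (a • z₁ + b • z₂ + w)
        ≤ γ * ∑ w ∈ W, p w * (a * J (z₁ + w) + b * J (z₂ + w)) :=
          mul_le_mul_of_nonneg_left (Finset.sum_le_sum key) hγ.le
      _ = a • (γ * ∑ w ∈ W, p w * J (z₁ + w)) + b • (γ * ∑ w ∈ W, p w * J (z₂ + w)) := by
          simp only [smul_eq_mul, Finset.mul_sum, ← Finset.sum_add_distrib]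
          exact Finset.sum_congr rfl fun w _ => by ring
  -- primal minimizer
  set K : Set (EuclideanSpace ℝ (Fin m)) := U ∩ (fun u => v + B u) ⁻¹' D with hK
  have hKc : IsCompact K :=
    hUc.inter_right (hDclosed.preimage (continuous_const.add B.continuous))
  have hKne : K.Nonempty := by
    obtain ⟨u, hu, hud⟩ := hfeas
    exact ⟨u, hu, hud⟩
  set g : EuclideanSpace ℝ (Fin m) → ℝ := fun u => Ci u + ε (v + B u) with hg
  have hgcont : Continuous g :=
    hCi.add (hεcont.comp (continuous_const.add B.continuous))
  obtain ⟨u₀, hu₀K, hmin⟩ := hKc.exists_isMinOn hKne hgcont.continuousOn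
  have hu₀U : u₀ ∈ U := hu₀K.1
  have hu₀D : v + B u₀ ∈ D := hu₀K.2
  -- weak duality
  have weak : ∀ y : EuclideanSpace ℝ (Fin n),
      ⟪y, v⟫ - conjOn U Ci (-(ContinuousLinearMap.adjoint B) y) - conjOn D ε y ≤ g u₀ := by
    intro y
    obtain ⟨_, _, _, hub₁⟩ := conjOn_eq_max hUc hUne hCi (-(ContinuousLinearMap.adjoint B) y)
    obtain ⟨_, _, _, hub₂⟩ := conjOn_eq_max hDcomp hDne hεcont y
    have h1 := hub₁ u₀ hu₀U
    have h2 := hub₂ (v + B u₀) hu₀D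
    have e1 : ⟪u₀, -(ContinuousLinearMap.adjoint B) y⟫ = -⟪y, B u₀⟫ := by
      rw [inner_neg_right, ContinuousLinearMap.adjoint_inner_right, real_inner_comm]
    have e2 : ⟪v + B u₀, y⟫ = ⟪y, v⟫ + ⟪y, B u₀⟫ := by
      rw [real_inner_comm, inner_add_right]
    rw [e1] at h1
    rw [e2] at h2
    simp only [hg]
    linarith
  -- strong duality
  have strong : ∀ a : ℝ, a < g u₀ → ∃ y : EuclideanSpace ℝ (Fin n),
      a < ⟪y, v⟫ - conjOn U Ci (-(ContinuousLinearMap.adjoint B) y) - conjOn D ε y := by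
    intro a ha
    -- the epigraph-type set
    set F : EuclideanSpace ℝ (Fin m) × EuclideanSpace ℝ (Fin n) →
        EuclideanSpace ℝ (Fin n) × ℝ :=
      fun q => (v + B q.1 - q.2, Ci q.1 + ε q.2) with hF
    set C : Set (EuclideanSpace ℝ (Fin n) × ℝ) := F '' (U ×ˢ D) with hC
    set R : Set (EuclideanSpace ℝ (Fin n) × ℝ) :=
      ({0} : Set (EuclideanSpace ℝ (Fin n))) ×ˢ Set.Ici (0 : ℝ) with hR
    set Eset : Set (EuclideanSpace ℝ (Fin n) × ℝ) := C + R with hE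
    have hmemE : ∀ q : EuclideanSpace ℝ (Fin n) × ℝ,
        q ∈ Eset ↔ ∃ u ∈ U, ∃ z ∈ D, q.1 = v + B u - z ∧ Ci u + ε z ≤ q.2 := by
      intro q
      constructor
      · rintro ⟨c, ⟨⟨u, z⟩, ⟨hu, hz⟩, rfl⟩, r, ⟨hr1, hr2⟩, rfl⟩
        refine ⟨u, hu, z, hz, ?_, ?_⟩
        · simp only [Set.mem_singleton_iff] at hr1
          simp [hF, hr1]
        · simp only [Set.mem_Ici] at hr2
          simp only [hF, Prod.snd_add]
          linarith
      · rintro ⟨u, hu, z, hz, hq1, hq2⟩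
        refine ⟨F (u, z), ⟨(u, z), ⟨hu, hz⟩, rfl⟩, (0, q.2 - (Ci u + ε z)),
          ⟨rfl, by simpa using hq2⟩, ?_⟩
        simp only [hF]
        ext1
        · simp [hq1.symm]
        · simp
    have hCcomp : IsCompact C := by
      apply (hUc.prod hDcomp).image
      exact ((continuous_const.add (B.continuous.comp continuous_fst)).sub
        continuous_snd).prodMk ((hCi.comp continuous_fst).add (hεcont.comp continuous_snd))
    have hRclosed : IsClosed R := isClosed_singleton.prod isClosed_Ici
    have hEclosed : IsClosed Eset := hRclosed.add_left_of_isCompact hCcomp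
    have hEconv : Convex ℝ Eset := by
      intro q₁ hq₁ q₂ hq₂ a' b' ha' hb' hab'
      rw [hmemE] at hq₁ hq₂ ⊢
      obtain ⟨u₁, hu₁, z₁, hz₁, he₁, ht₁⟩ := hq₁
      obtain ⟨u₂, hu₂, z₂, hz₂, he₂, ht₂⟩ := hq₂
      refine ⟨a' • u₁ + b' • u₂, hUconv hu₁ hu₂ ha' hb' hab',
        a' • z₁ + b' • z₂, hDconv hz₁ hz₂ ha' hb' hab', ?_, ?_⟩
      · have : (a' • q₁ + b' • q₂).1 = a' • q₁.1 + b' • q₂.1 := rfl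
        rw [this, he₁, he₂, map_add, map_smul, map_smul]
        calc a' • (v + B u₁ - z₁) + b' • (v + B u₂ - z₂)
            = (a' + b') • v + (a' • B u₁ + b' • B u₂) - (a' • z₁ + b' • z₂) := by
              simp only [smul_sub, smul_add, add_smul]; abel
          _ = v + (a' • B u₁ + b' • B u₂) - (a' • z₁ + b' • z₂) := by rw [hab', one_smul]
      · have hsnd : (a' • q₁ + b' • q₂).2 = a' * q₁.2 + b' * q₂.2 := rfl
        rw [hsnd]
        have hc1 := hCiconv.2 hu₁ hu₂ ha' hb' hab'
        have hc2 := hεconv.2 hz₁ hz₂ ha' hb' hab'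
        simp only [smul_eq_mul] at hc1 hc2
        nlinarith [mul_le_mul_of_nonneg_left ht₁ ha', mul_le_mul_of_nonneg_left ht₂ hb']
    have hnotin : ((0 : EuclideanSpace ℝ (Fin n)), a) ∉ Eset := by
      rw [hmemE]
      rintro ⟨u, hu, z, hz, hq1, hq2⟩
      have hz' : z = v + B u := by
        have : v + B u - z = 0 := hq1.symm
        have := sub_eq_zero.mp this
        exact this.symm
      subst hz'
      have : u ∈ K := ⟨hu, hz⟩
      have := hmin this
      simp only [hg] at this hq2 ⊢
      exact absurd (le_trans this hq2) (not_le.mpr ha)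
    obtain ⟨f, s, hfa, hfE⟩ := geometric_hahn_banach_point_closed hEconv hEclosed hnotin
    -- decompose f
    set c : ℝ := f (0, 1) with hc
    have hsplit : ∀ (b : EuclideanSpace ℝ (Fin n)) (t : ℝ), f (b, t) = f (b, 0) + t * c := by
      intro b t
      have : ((b, t) : EuclideanSpace ℝ (Fin n) × ℝ) =
          (b, (0 : ℝ)) + t • ((0 : EuclideanSpace ℝ (Fin n)), (1 : ℝ)) := by
        simp [Prod.ext_iff]
      rw [this, map_add, map_smul, smul_eq_mul]
    have hf00 : f ((0 : EuclideanSpace ℝ (Fin n)), (0 : ℝ)) = 0 := by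
      have : ((0 : EuclideanSpace ℝ (Fin n)), (0 : ℝ)) =
          (0 : EuclideanSpace ℝ (Fin n) × ℝ) := rfl
      rw [this, map_zero]
    have hP0 : ((0 : EuclideanSpace ℝ (Fin n)), g u₀) ∈ Eset := by
      rw [hmemE]
      exact ⟨u₀, hu₀U, v + B u₀, hu₀D, by simp, le_of_eq rfl⟩
    have hsa : a * c < s := by
      have := hfa
      rw [hsplit, hf00] at this
      linarith
    have hsP : s < g u₀ * c := by
      have := hfE _ hP0
      rw [hsplit, hf00] at this
      linarith
    have hcpos : 0 < c := by
      by_contra hcle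
      push_neg at hcle
      nlinarith
    -- the separating vector
    set fb : EuclideanSpace ℝ (Fin n) →L[ℝ] ℝ :=
      f.comp (ContinuousLinearMap.inl ℝ (EuclideanSpace ℝ (Fin n)) ℝ) with hfb
    set yv : EuclideanSpace ℝ (Fin n) :=
      (InnerProductSpace.toDual ℝ (EuclideanSpace ℝ (Fin n))).symm fb with hyv
    have hyvb : ∀ b : EuclideanSpace ℝ (Fin n), ⟪yv, b⟫ = f (b, 0) :=
      fun b => InnerProductSpace.toDual_symm_apply
    set y : EuclideanSpace ℝ (Fin n) := c⁻¹ • yv with hy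
    have key : ∀ u ∈ U, ∀ z ∈ D, a < ⟪y, v + B u - z⟫ + (Ci u + ε z) := by
      intro u hu z hz
      have hq : ((v + B u - z, Ci u + ε z) : EuclideanSpace ℝ (Fin n) × ℝ) ∈ Eset := by
        rw [hmemE]; exact ⟨u, hu, z, hz, rfl, le_refl _⟩
      have hsep := hfE _ hq
      rw [hsplit] at hsep
      rw [← hyvb] at hsep
      have : a * c < ⟪yv, v + B u - z⟫ + (Ci u + ε z) * c := lt_trans hsa hsep
      have hinner : ⟪y, v + B u - z⟫ = c⁻¹ * ⟪yv, v + B u - z⟫ := by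
        rw [hy, real_inner_smul_left]
      rw [hinner]
      have h2 : a < (⟪yv, v + B u - z⟫ + (Ci u + ε z) * c) / c := by
        rw [lt_div_iff₀ hcpos]; linarith
      have h3 : (⟪yv, v + B u - z⟫ + (Ci u + ε z) * c) / c
          = c⁻¹ * ⟪yv, v + B u - z⟫ + (Ci u + ε z) := by
        rw [add_div, mul_div_assoc, div_self hcpos.ne', mul_one, div_eq_inv_mul]
      linarith
    refine ⟨y, ?_⟩
    obtain ⟨u₁, hu₁U, heq₁, _⟩ := conjOn_eq_max hUc hUne hCi (-(ContinuousLinearMap.adjoint B) y)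
    obtain ⟨z₁, hz₁D, heq₂, _⟩ := conjOn_eq_max hDcomp hDne hεcont y
    have hk := key u₁ hu₁U z₁ hz₁D
    have e0 : ⟪y, v + B u₁ - z₁⟫ = ⟪y, v⟫ + ⟪y, B u₁⟫ - ⟪y, z₁⟫ := by
      rw [inner_sub_right, inner_add_right]
    have e1 : ⟪u₁, -(ContinuousLinearMap.adjoint B) y⟫ = -⟪y, B u₁⟫ := by
      rw [inner_neg_right, ContinuousLinearMap.adjoint_inner_right, real_inner_comm]
    have e2 : ⟪z₁, y⟫ = ⟪y, z₁⟫ := real_inner_comm _ _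
    rw [heq₁, heq₂, e1, e2]
    rw [e0] at hk
    linarith
  -- assemble
  refine ⟨u₀, hu₀U, hu₀D, ?_, ?_⟩
  · intro u hu hud
    have := hmin (Set.mem_inter hu hud)
    simp only [hg] at this
    rw [← hε, ← hε]
    exact this
  · have hgoal : (Ci u₀ + γ * ∑ w ∈ W, p w * J (fs x + B u₀ + w) : ℝ) = g u₀ := by
      simp only [hg, hε, hv]
    rw [hgoal]
    apply le_antisymm
    · exact iSup_le fun y => EReal.coe_le_coe_iff.mpr (weak y)
    · by_contra hlt
      rw [not_le] at hlt
      obtain ⟨a, ha1, ha2⟩ := EReal.exists_between_coe_real hlt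
      obtain ⟨y, hy⟩ := strong a (EReal.coe_lt_coe_iff.mp ha2)
      have h1 : ((a : ℝ) : EReal) <
          ((⟪y, fs x⟫ - conjOn U Ci (-(ContinuousLinearMap.adjoint B) y) - conjOn D ε y : ℝ) :
            EReal) := EReal.coe_lt_coe_iff.mpr hy
      have h2 := le_iSup (fun y : EuclideanSpace ℝ (Fin n) =>
          ((⟪y, fs x⟫ - conjOn U Ci (-(ContinuousLinearMap.adjoint B) y) - conjOn D ε y : ℝ) :
            EReal)) y
      exact absurd (lt_of_lt_of_le h1 h2) (not_lt.mpr (le_of_lt ha1))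
end

section
/- Let 𝕏ᵈ ⊆ ℝⁿ, Y ⊆ ℝⁿ, Z ⊆ ℝⁿ be finite nonempty sets, W ⊆ ℝⁿ a finite nonempty set with p : W → ℝ satisfying p(w) ≥ 0 and Σ_{w∈W} p(w) = 1, γ ∈ (0,1), f_s : ℝⁿ → ℝⁿ, C_s : ℝⁿ → ℝ, and g : ℝⁿ → ℝ any function. Let L be a map sending each J : 𝕏ᵈ → ℝ to L J : ℝⁿ → ℝ such that for all J₁, J₂ : 𝕏ᵈ → ℝ and all z ∈ ℝⁿ, |L J₁(z) − L J₂(z)| ≤ max_{x∈𝕏ᵈ} |J₁(x) − J₂(x)| (a non-expansive extension). Let E be a map sending each h : Z → ℝ to E h : ℝⁿ → ℝ such that for all h₁, h₂ : Z → ℝ and all z ∈ ℝⁿ, |E h₁(z) − E h₂(z)| ≤ max_{z'∈Z} |h₁(z') − h₂(z')|. For J : 𝕏ᵈ → ℝ define: ε_J(x) := γ · Σ_{w∈W} p(w) · (L J)(x + w) for x ∈ 𝕏ᵈ; ϕ_J(y) := g(y) + max_{x∈𝕏ᵈ} (⟨x, y⟩ − ε_J(x)) for y ∈ Y; h_J(z)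 := max_{y∈Y} (⟨y, z⟩ − ϕ_J(y)) for z ∈ Z; and T̂ᵈ J(x) := C_s(x) + (E h_J)(f_s(x)) for x ∈ 𝕏ᵈ. Then T̂ᵈ is γ-contractive in the sup norm: for all J₁, J₂ : 𝕏ᵈ → ℝ, max_{x∈𝕏ᵈ} |T̂ᵈ J₁(x) − T̂ᵈ J₂(x)| ≤ γ · max_{x∈𝕏ᵈ} |J₁(x) − J₂(x)|. -/
open scoped RealInnerProductSpace

/-! Each stage of the operator is non-expansive in the sup norm: the extensions `L` and `E`,
the convex combination over `W`, and the two discrete conjugations, since a maximum of functions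
that differ pointwise by at most `c` changes by at most `c`. The only contraction is the factor
`γ` in front of the expectation, and it survives the composition. -/

namespace Finset

variable {ι : Type*}

theorem abs_sup'_sub_sup'_le (s : Finset ι) (hs : s.Nonempty) {f g : ι → ℝ} {c : ℝ}
    (h : ∀ i ∈ s, |f i - g i| ≤ c) : |s.sup' hs f - s.sup' hs g| ≤ c := by
  rw [abs_sub_le_iff, sub_le_iff_le_add, sub_le_iff_le_add]
  constructor <;> refine sup'_le _ _ fun i hi => ?_
  · linarith [(abs_sub_le_iff.mp (h i hi)).1, le_sup' g hi]
  · linarith [(abs_sub_le_iff.mp (h i hi)).2, le_sup' f hi]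

theorem abs_sum_mul_sub_sum_mul_le {s : Finset ι} {p a b : ι → ℝ} {c : ℝ}
    (hp : ∀ i ∈ s, 0 ≤ p i) (hpsum : ∑ i ∈ s, p i = 1) (h : ∀ i ∈ s, |a i - b i| ≤ c) :
    |∑ i ∈ s, p i * a i - ∑ i ∈ s, p i * b i| ≤ c :=
  calc |∑ i ∈ s, p i * a i - ∑ i ∈ s, p i * b i|
      ≤ ∑ i ∈ s, |p i * (a i - b i)| := by
        simpa only [← sum_sub_distrib, mul_sub] using abs_sum_le_sum_abs _ _
    _ ≤ ∑ i ∈ s, p i * c := sum_le_sum fun i hi => by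
        rw [abs_mul, abs_of_nonneg (hp i hi)]
        exact mul_le_mul_of_nonneg_left (h i hi) (hp i hi)
    _ = c := by rw [← sum_mul, hpsum, one_mul]

variable {E : Type*} [NormedAddCommGroup E] [InnerProductSpace ℝ E]

noncomputable def discreteConj (s : Finset E) (hs : s.Nonempty) (f : E → ℝ) (y : E) : ℝ :=
  s.sup' hs fun x => ⟪x, y⟫ - f x

theorem abs_discreteConj_sub_le (s : Finset E) (hs : s.Nonempty) {f f' : E → ℝ} {c : ℝ}
    (h : ∀ x ∈ s, |f x - f' x| ≤ c) (y : E) :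
    |s.discreteConj hs f y - s.discreteConj hs f' y| ≤ c :=
  abs_sup'_sub_sup'_le s hs fun x hx => by
    rw [sub_sub_sub_cancel_left, abs_sub_comm]
    exact h x hx

end Finset

theorem dCDP_contraction_general {n : ℕ}
    (Xd Y Z W : Finset (EuclideanSpace ℝ (Fin n)))
    (hXd : Xd.Nonempty) (hY : Y.Nonempty) (hZ : Z.Nonempty)
    (p : EuclideanSpace ℝ (Fin n) → ℝ)
    (hp : ∀ w ∈ W, 0 ≤ p w) (hpsum : ∑ w ∈ W, p w = 1)
    (γ : ℝ) (hγ0 : 0 < γ)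
    (fs : EuclideanSpace ℝ (Fin n) → EuclideanSpace ℝ (Fin n))
    (Cs g : EuclideanSpace ℝ (Fin n) → ℝ)
    (L : ({x // x ∈ Xd} → ℝ) → EuclideanSpace ℝ (Fin n) → ℝ)
    (hL : ∀ (J₁ J₂ : {x // x ∈ Xd} → ℝ) (z : EuclideanSpace ℝ (Fin n)),
      |L J₁ z - L J₂ z| ≤
        Xd.attach.sup' (Finset.attach_nonempty_iff.mpr hXd) (fun x => |J₁ x - J₂ x|))
    (E : ({z // z ∈ Z} → ℝ) → EuclideanSpace ℝ (Fin n) → ℝ)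
    (hE : ∀ (h₁ h₂ : {z // z ∈ Z} → ℝ) (ζ : EuclideanSpace ℝ (Fin n)),
      |E h₁ ζ - E h₂ ζ| ≤
        Z.attach.sup' (Finset.attach_nonempty_iff.mpr hZ) (fun z' => |h₁ z' - h₂ z'|))
    (T : ({x // x ∈ Xd} → ℝ) → {x // x ∈ Xd} → ℝ)
    (hT : ∀ (J : {x // x ∈ Xd} → ℝ) (x : {x // x ∈ Xd}),
      T J x = Cs (x : EuclideanSpace ℝ (Fin n)) +
        E (fun z => Y.sup' hY (fun y => ⟪y, (z : EuclideanSpace ℝ (Fin n))⟫ -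
              (g y + Xd.sup' hXd (fun x' =>
                ⟪x', y⟫ - γ * ∑ w ∈ W, p w * L J (x' + w)))))
          (fs (x : EuclideanSpace ℝ (Fin n)))) :
    ∀ J₁ J₂ : {x // x ∈ Xd} → ℝ,
      Xd.attach.sup' (Finset.attach_nonempty_iff.mpr hXd) (fun x => |T J₁ x - T J₂ x|) ≤
        γ * Xd.attach.sup' (Finset.attach_nonempty_iff.mpr hXd) (fun x => |J₁ x - J₂ x|) := by
  intro J₁ J₂
  set M := Xd.attach.sup' (Finset.attach_nonempty_iff.mpr hXd) (fun x => |J₁ x - J₂ x|)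
  let ε (J : {x // x ∈ Xd} → ℝ) (x : EuclideanSpace ℝ (Fin n)) : ℝ :=
    γ * ∑ w ∈ W, p w * L J (x + w)
  let h (J : {x // x ∈ Xd} → ℝ) (z : {z // z ∈ Z}) : ℝ :=
    Y.discreteConj hY (fun y => g y + Xd.discreteConj hXd (ε J) y) z
  have hε : ∀ x ∈ Xd, |ε J₁ x - ε J₂ x| ≤ γ * M := fun x _ => by
    rw [← mul_sub, abs_mul, abs_of_pos hγ0]
    exact mul_le_mul_of_nonneg_left
      (Finset.abs_sum_mul_sub_sum_mul_le hp hpsum fun w _ => hL J₁ J₂ _) hγ0.le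
  have hh : ∀ z, |h J₁ z - h J₂ z| ≤ γ * M := fun z =>
    Y.abs_discreteConj_sub_le hY (fun y _ => by
      rw [add_sub_add_left_eq_sub]
      exact Xd.abs_discreteConj_sub_le hXd hε y) z
  refine Finset.sup'_le _ _ fun x _ => ?_
  rw [hT, hT, add_sub_add_left_eq_sub]
  exact (hE (h J₁) (h J₂) _).trans (Finset.sup'_le _ _ fun z _ => hh z)

/-- Theorem 3.4 (convergence of ConjVI): the discrete conjugate DP operator `T̂ᵈ`, built
from a non-expansive extension `L` of the value function, a scaled expectation over the
finite disturbance set `W`, two discrete conjugations over the dual grid `Y` and the grid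
`Z`, a fixed additive term `g`, and a non-expansive extension `E` evaluated at `f_s(x)`,
is a `γ`-contraction in the sup norm on functions `𝕏ᵈ → ℝ`. -/
theorem dCDP_contraction {n : ℕ}
    (Xd Y Z W : Finset (EuclideanSpace ℝ (Fin n)))
    (hXd : Xd.Nonempty) (hY : Y.Nonempty) (hZ : Z.Nonempty) (hW : W.Nonempty)
    (p : EuclideanSpace ℝ (Fin n) → ℝ)
    (hp : ∀ w ∈ W, 0 ≤ p w) (hpsum : ∑ w ∈ W, p w = 1)
    (γ : ℝ) (hγ0 : 0 < γ) (hγ1 : γ < 1)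
    (fs : EuclideanSpace ℝ (Fin n) → EuclideanSpace ℝ (Fin n))
    (Cs g : EuclideanSpace ℝ (Fin n) → ℝ)
    (L : ({x // x ∈ Xd} → ℝ) → EuclideanSpace ℝ (Fin n) → ℝ)
    (hL : ∀ (J₁ J₂ : {x // x ∈ Xd} → ℝ) (z : EuclideanSpace ℝ (Fin n)),
      |L J₁ z - L J₂ z| ≤
        Xd.attach.sup' (Finset.attach_nonempty_iff.mpr hXd) (fun x => |J₁ x - J₂ x|))
    (E : ({z // z ∈ Z} → ℝ) → EuclideanSpace ℝ (Fin n) → ℝ)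
    (hE : ∀ (h₁ h₂ : {z // z ∈ Z} → ℝ) (ζ : EuclideanSpace ℝ (Fin n)),
      |E h₁ ζ - E h₂ ζ| ≤
        Z.attach.sup' (Finset.attach_nonempty_iff.mpr hZ) (fun z' => |h₁ z' - h₂ z'|))
    (T : ({x // x ∈ Xd} → ℝ) → {x // x ∈ Xd} → ℝ)
    (hT : ∀ (J : {x // x ∈ Xd} → ℝ) (x : {x // x ∈ Xd}),
      T J x = Cs (x : EuclideanSpace ℝ (Fin n)) +
        E (fun z => Y.sup' hY (fun y => ⟪y, (z : EuclideanSpace ℝ (Fin n))⟫ -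
              (g y + Xd.sup' hXd (fun x' =>
                ⟪x', y⟫ - γ * ∑ w ∈ W, p w * L J (x' + w)))))
          (fs (x : EuclideanSpace ℝ (Fin n)))) :
    ∀ J₁ J₂ : {x // x ∈ Xd} → ℝ,
      Xd.attach.sup' (Finset.attach_nonempty_iff.mpr hXd) (fun x => |T J₁ x - T J₂ x|) ≤
        γ * Xd.attach.sup' (Finset.attach_nonempty_iff.mpr hXd) (fun x => |J₁ x - J₂ x|) :=
  dCDP_contraction_general Xd Y Z W hXd hY hZ p hp hpsum γ hγ0 fs Cs g L hL E hE T hT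
end

section
/- Let 𝕏 ⊆ ℝⁿ be nonempty and compact, W ⊆ ℝⁿ finite nonempty with p : W → ℝ satisfying p(w) ≥ 0 and Σ_{w∈W} p(w) = 1, γ > 0, and D := {z ∈ ℝⁿ : z + w ∈ 𝕏 for all w ∈ W} nonempty. Let 𝕏ᵈ ⊆ ℝⁿ be finite with X_D := 𝕏ᵈ ∩ D nonempty. Let 𝕌 ⊆ ℝᵐ be nonempty compact, 𝕌ᵈ ⊆ 𝕌 nonempty finite, C_i : ℝᵐ → ℝ continuous and Lipschitz on 𝕌 with constant K_i ≥ 0, B a real n×m matrix, and J : ℝⁿ → ℝ Lipschitz on 𝕏 with constant K ≥ 0. Define ε(z) := γ · Σ_{w∈W} p(w) · J(z + w). Let e_e ≥ 0 and ε̃ : X_D → ℝ satisfy |ε(x) − ε̃(x)| ≤ γ·e_e for all x ∈ X_D. Let Y ⊆ ℝⁿ be finite nonempty, and let A : ℝᵐ → ℝ and e_v ≥ 0 satisfy 0 ≤ A(−Bᵀy) − max_{u∈𝕌ᵈ} (⟨u, −Bᵀy⟩ − C_i(u)) ≤ e_v for every y ∈ Y. Define φ(y) := C_i^{*𝕌}(−Bᵀy)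 + ε^{*D}(y) and ϕ(y) := A(−Bᵀy) + max_{x∈X_D} (⟨x, y⟩ − ε̃(x)). Then for every y ∈ Y, |φ(y) − ϕ(y)| ≤ γ·e_e + (‖Bᵀy‖ + K_i) · d⃗(𝕌, 𝕌ᵈ) + e_v + (‖y‖ + γ·K) · d⃗(D, X_D). -/
open scoped RealInnerProductSpace

/-- One-sided Hausdorff distance from `S` to `T`: `d⃗(S,T) = sup_{s∈S} inf_{t∈T} ‖s − t‖`. -/
noncomputable def dOneSided {k : ℕ} (S T : Set (EuclideanSpace ℝ (Fin k))) : ℝ :=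
  sSup ((fun s => Metric.infDist s T) '' S)

lemma dOneSided_nonneg {k : ℕ} (S T : Set (EuclideanSpace ℝ (Fin k))) :
    0 ≤ dOneSided S T :=
  Real.sSup_nonneg (by rintro _ ⟨s, _, rfl⟩; exact Metric.infDist_nonneg)

lemma sup_bounds {k : ℕ} {S : Set (EuclideanSpace ℝ (Fin k))} (hSc : IsCompact S)
    {G : Finset (EuclideanSpace ℝ (Fin k))} (hGne : G.Nonempty)
    (hGsub : (↑G : Set (EuclideanSpace ℝ (Fin k))) ⊆ S)
    {g : EuclideanSpace ℝ (Fin k) → ℝ} {L : ℝ} (hL : 0 ≤ L)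
    (hLip : ∀ a ∈ S, ∀ b ∈ S, |g a - g b| ≤ L * ‖a - b‖) :
    G.sup' hGne g ≤ sSup (g '' S) ∧
      sSup (g '' S) ≤ G.sup' hGne g + L * dOneSided S ↑G := by
  obtain ⟨t0, ht0⟩ := hGne
  have ht0S : t0 ∈ S := hGsub ht0
  have hbdd : BddAbove (g '' S) := by
    refine ⟨g t0 + L * Metric.diam S, ?_⟩
    rintro _ ⟨s, hs, rfl⟩
    have h1 : g s - g t0 ≤ |g s - g t0| := le_abs_self _
    have h2 := hLip s hs t0 ht0S
    have h3 : ‖s - t0‖ ≤ Metric.diam S := by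
      rw [← dist_eq_norm]
      exact Metric.dist_le_diam_of_mem hSc.isBounded hs ht0S
    nlinarith [mul_le_mul_of_nonneg_left h3 hL]
  have hbddInf : BddAbove ((fun s => Metric.infDist s (↑G : Set (EuclideanSpace ℝ (Fin k)))) '' S) :=
    (hSc.image (Metric.continuous_infDist_pt _)).bddAbove
  constructor
  · exact Finset.sup'_le ⟨t0, ht0⟩ g fun t ht => le_csSup hbdd ⟨t, hGsub ht, rfl⟩
  · refine csSup_le ⟨g t0, t0, ht0S, rfl⟩ ?_
    rintro _ ⟨s, hs, rfl⟩
    obtain ⟨t, htG, hdist⟩ :=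
        (G.finite_toSet.isCompact).exists_infDist_eq_dist ⟨t0, ht0⟩ s
    have htG' : t ∈ G := htG
    have h1 : g s ≤ g t + L * ‖s - t‖ := by
      have := hLip s hs t (hGsub htG)
      have h2 : g s - g t ≤ |g s - g t| := le_abs_self _
      linarith
    have h2 : Metric.infDist s (↑G : Set (EuclideanSpace ℝ (Fin k))) ≤ dOneSided S ↑G :=
      le_csSup hbddInf ⟨s, hs, rfl⟩
    have h3 : ‖s - t‖ = Metric.infDist s (↑G : Set (EuclideanSpace ℝ (Fin k))) := by
      rw [hdist, dist_eq_norm]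
    have h4 : g t ≤ G.sup' ⟨t0, ht0⟩ g := Finset.le_sup' g htG'
    have h5 : L * ‖s - t‖ ≤ L * dOneSided S ↑G := by
      rw [h3]; exact mul_le_mul_of_nonneg_left h2 hL
    linarith

/-- Lemma A.5: bound on the error between the function `φ` of the exact CDP operator and
its numerical counterpart `ϕ` computed in the ConjVI algorithm, over the dual grid `Y`. -/
theorem phi_error_bound {n m : ℕ}
    (X : Set (EuclideanSpace ℝ (Fin n))) (hXne : X.Nonempty) (hXc : IsCompact X)
    (W : Finset (EuclideanSpace ℝ (Fin n))) (hWne : W.Nonempty)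
    (p : EuclideanSpace ℝ (Fin n) → ℝ)
    (hp : ∀ w ∈ W, 0 ≤ p w) (hpsum : ∑ w ∈ W, p w = 1)
    (γ : ℝ) (hγ : 0 < γ)
    (D : Set (EuclideanSpace ℝ (Fin n)))
    (hD : D = {z | ∀ w ∈ W, z + w ∈ X}) (hDne : D.Nonempty)
    (Xd XD : Finset (EuclideanSpace ℝ (Fin n)))
    (hXD : (↑XD : Set (EuclideanSpace ℝ (Fin n))) = (↑Xd : Set (EuclideanSpace ℝ (Fin n))) ∩ D)
    (hXDne : XD.Nonempty)
    (U : Set (EuclideanSpace ℝ (Fin m))) (hUne : U.Nonempty) (hUc : IsCompact U)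
    (Ud : Finset (EuclideanSpace ℝ (Fin m))) (hUdne : Ud.Nonempty)
    (hUdsub : (↑Ud : Set (EuclideanSpace ℝ (Fin m))) ⊆ U)
    (Ci : EuclideanSpace ℝ (Fin m) → ℝ) (hCi : Continuous Ci)
    (Ki : ℝ) (hKi : 0 ≤ Ki)
    (hCiLip : ∀ u ∈ U, ∀ u' ∈ U, |Ci u - Ci u'| ≤ Ki * ‖u - u'‖)
    (B : EuclideanSpace ℝ (Fin m) →L[ℝ] EuclideanSpace ℝ (Fin n))
    (J : EuclideanSpace ℝ (Fin n) → ℝ)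
    (K : ℝ) (hK : 0 ≤ K)
    (hJLip : ∀ x ∈ X, ∀ x' ∈ X, |J x - J x'| ≤ K * ‖x - x'‖)
    (ε : EuclideanSpace ℝ (Fin n) → ℝ)
    (hε : ∀ z, ε z = γ * ∑ w ∈ W, p w * J (z + w))
    (e_e : ℝ) (hee : 0 ≤ e_e)
    (εt : EuclideanSpace ℝ (Fin n) → ℝ)
    (hεt : ∀ x ∈ XD, |ε x - εt x| ≤ γ * e_e)
    (Y : Finset (EuclideanSpace ℝ (Fin n))) (hYne : Y.Nonempty)
    (A : EuclideanSpace ℝ (Fin m) → ℝ) (e_v : ℝ) (hev : 0 ≤ e_v)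
    (hA : ∀ y ∈ Y,
      0 ≤ A (-(ContinuousLinearMap.adjoint B) y) -
          Ud.sup' hUdne (fun u => ⟪u, -(ContinuousLinearMap.adjoint B) y⟫ - Ci u) ∧
      A (-(ContinuousLinearMap.adjoint B) y) -
          Ud.sup' hUdne (fun u => ⟪u, -(ContinuousLinearMap.adjoint B) y⟫ - Ci u) ≤ e_v) :
    ∀ y ∈ Y,
      |(conjOn U Ci (-(ContinuousLinearMap.adjoint B) y) + conjOn D ε y) -
          (A (-(ContinuousLinearMap.adjoint B) y) +
            XD.sup' hXDne (fun x => ⟪x, y⟫ - εt x))| ≤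
        γ * e_e + (‖(ContinuousLinearMap.adjoint B) y‖ + Ki) *
            dOneSided U (↑Ud : Set (EuclideanSpace ℝ (Fin m))) +
          e_v + (‖y‖ + γ * K) * dOneSided D (↑XD : Set (EuclideanSpace ℝ (Fin n))) := by
  intro y hy
  set q := -(ContinuousLinearMap.adjoint B) y with hq
  have hqnorm : ‖q‖ = ‖(ContinuousLinearMap.adjoint B) y‖ := norm_neg _
  -- D is compact
  have hDclosed : IsClosed D := by
    have : D = ⋂ w ∈ W, (fun z => z + w) ⁻¹' X := by
      rw [hD]; ext z; simp
    rw [this]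
    exact isClosed_biInter fun w _ =>
      hXc.isClosed.preimage (continuous_id.add continuous_const)
  obtain ⟨w0, hw0⟩ := hWne
  obtain ⟨C, hC⟩ := isBounded_iff_forall_norm_le.mp hXc.isBounded
  have hDbdd : Bornology.IsBounded D := by
    rw [isBounded_iff_forall_norm_le]
    refine ⟨C + ‖w0‖, fun z hz => ?_⟩
    rw [hD] at hz
    have h1 : ‖z + w0‖ ≤ C := hC _ (hz w0 hw0)
    calc ‖z‖ = ‖(z + w0) - w0‖ := by rw [add_sub_cancel_right]
      _ ≤ ‖z + w0‖ + ‖w0‖ := norm_sub_le _ _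
      _ ≤ C + ‖w0‖ := by linarith
  have hDc : IsCompact D := Metric.isCompact_of_isClosed_isBounded hDclosed hDbdd
  have hXDsub : (↑XD : Set (EuclideanSpace ℝ (Fin n))) ⊆ D := by
    rw [hXD]; exact Set.inter_subset_right
  -- ε is γK-Lipschitz on D
  have hεLip : ∀ a ∈ D, ∀ b ∈ D, |ε a - ε b| ≤ (γ * K) * ‖a - b‖ := by
    intro a ha b hb
    rw [hD] at ha hb
    rw [hε, hε, ← mul_sub, ← Finset.sum_sub_distrib, abs_mul, abs_of_pos hγ]
    have hsum : |∑ w ∈ W, (p w * J (a + w) - p w * J (b + w))| ≤ K * ‖a - b‖ := by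
      calc |∑ w ∈ W, (p w * J (a + w) - p w * J (b + w))|
          ≤ ∑ w ∈ W, |p w * J (a + w) - p w * J (b + w)| := Finset.abs_sum_le_sum_abs _ _
        _ ≤ ∑ w ∈ W, p w * (K * ‖a - b‖) := by
            refine Finset.sum_le_sum fun w hw => ?_
            rw [← mul_sub, abs_mul, abs_of_nonneg (hp w hw)]
            refine mul_le_mul_of_nonneg_left ?_ (hp w hw)
            have := hJLip (a + w) (ha w hw) (b + w) (hb w hw)
            have heq : (a + w) - (b + w) = a - b := by abel
            rwa [heq] at this
        _ = K * ‖a - b‖ := by rw [← Finset.sum_mul, hpsum, one_mul]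
    calc γ * |∑ w ∈ W, (p w * J (a + w) - p w * J (b + w))|
        ≤ γ * (K * ‖a - b‖) := mul_le_mul_of_nonneg_left hsum hγ.le
      _ = (γ * K) * ‖a - b‖ := by ring
  -- the U-side function is Lipschitz
  have hgULip : ∀ a ∈ U, ∀ b ∈ U,
      |(⟪a, q⟫ - Ci a) - (⟪b, q⟫ - Ci b)| ≤ (‖(ContinuousLinearMap.adjoint B) y‖ + Ki) * ‖a - b‖ := by
    intro a ha b hb
    have h1 : (⟪a, q⟫ - Ci a) - (⟪b, q⟫ - Ci b) = ⟪a - b, q⟫ + (Ci b - Ci a) := by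
      rw [inner_sub_left]; ring
    rw [h1]
    calc |⟪a - b, q⟫ + (Ci b - Ci a)| ≤ |⟪a - b, q⟫| + |Ci b - Ci a| := abs_add_le _ _
      _ ≤ ‖a - b‖ * ‖q‖ + Ki * ‖b - a‖ := by
          gcongr
          · exact abs_real_inner_le_norm _ _
          · exact hCiLip b hb a ha
      _ = (‖(ContinuousLinearMap.adjoint B) y‖ + Ki) * ‖a - b‖ := by
          rw [hqnorm, norm_sub_rev b a]; ring
  -- the D-side function is Lipschitz
  have hgDLip : ∀ a ∈ D, ∀ b ∈ D,
      |(⟪a, y⟫ - ε a) - (⟪b, y⟫ - ε b)| ≤ (‖y‖ + γ * K) * ‖a - b‖ := by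
    intro a ha b hb
    have h1 : (⟪a, y⟫ - ε a) - (⟪b, y⟫ - ε b) = ⟪a - b, y⟫ + (ε b - ε a) := by
      rw [inner_sub_left]; ring
    rw [h1]
    calc |⟪a - b, y⟫ + (ε b - ε a)| ≤ |⟪a - b, y⟫| + |ε b - ε a| := abs_add_le _ _
      _ ≤ ‖a - b‖ * ‖y‖ + (γ * K) * ‖b - a‖ := by
          gcongr
          · exact abs_real_inner_le_norm _ _
          · exact hεLip b hb a ha
      _ = (‖y‖ + γ * K) * ‖a - b‖ := by rw [norm_sub_rev b a]; ring
  have hLU : (0:ℝ) ≤ ‖(ContinuousLinearMap.adjoint B) y‖ + Ki :=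
    add_nonneg (norm_nonneg _) hKi
  have hLD : (0:ℝ) ≤ ‖y‖ + γ * K := add_nonneg (norm_nonneg _) (by positivity)
  obtain ⟨hU1, hU2⟩ := sup_bounds (g := fun u => ⟪u, q⟫ - Ci u) hUc hUdne hUdsub hLU hgULip
  obtain ⟨hD1, hD2⟩ := sup_bounds (g := fun x => ⟪x, y⟫ - ε x) hDc hXDne hXDsub hLD hgDLip
  obtain ⟨hA1, hA2⟩ := hA y hy
  -- sup' with εt vs ε
  have hMt1 : XD.sup' hXDne (fun x => ⟪x, y⟫ - εt x) ≤
      XD.sup' hXDne (fun x => ⟪x, y⟫ - ε x) + γ * e_e := by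
    refine Finset.sup'_le _ _ fun x hx => ?_
    have h1 := hεt x hx
    have h2 : ε x - εt x ≤ γ * e_e := (abs_le.mp h1).2
    have h3 : εt x - ε x ≤ γ * e_e := by
      have := (abs_le.mp h1).1; linarith
    have h4 : ⟪x, y⟫ - ε x ≤ XD.sup' hXDne (fun x => ⟪x, y⟫ - ε x) :=
      Finset.le_sup' (fun x => ⟪x, y⟫ - ε x) hx
    linarith
  have hMt2 : XD.sup' hXDne (fun x => ⟪x, y⟫ - ε x) ≤
      XD.sup' hXDne (fun x => ⟪x, y⟫ - εt x) + γ * e_e := by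
    refine Finset.sup'_le _ _ fun x hx => ?_
    have h1 := hεt x hx
    have h3 : -(γ * e_e) ≤ ε x - εt x := (abs_le.mp h1).1
    have h4 : ⟪x, y⟫ - εt x ≤ XD.sup' hXDne (fun x => ⟪x, y⟫ - εt x) :=
      Finset.le_sup' (fun x => ⟪x, y⟫ - εt x) hx
    linarith
  have hdU : (0:ℝ) ≤ dOneSided U (↑Ud : Set (EuclideanSpace ℝ (Fin m))) := dOneSided_nonneg _ _
  have hdD : (0:ℝ) ≤ dOneSided D (↑XD : Set (EuclideanSpace ℝ (Fin n))) := dOneSided_nonneg _ _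
  have hmU : (0:ℝ) ≤ (‖(ContinuousLinearMap.adjoint B) y‖ + Ki) *
      dOneSided U (↑Ud : Set (EuclideanSpace ℝ (Fin m))) := mul_nonneg hLU hdU
  have hmD : (0:ℝ) ≤ (‖y‖ + γ * K) *
      dOneSided D (↑XD : Set (EuclideanSpace ℝ (Fin n))) := mul_nonneg hLD hdD
  have hcU : conjOn U Ci q = sSup ((fun u => ⟪u, q⟫ - Ci u) '' U) := rfl
  have hcD : conjOn D ε y = sSup ((fun x => ⟪x, y⟫ - ε x) '' D) := rfl
  rw [abs_le]
  rw [hcU, hcD]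
  have hgee : (0:ℝ) ≤ γ * e_e := by positivity
  constructor
  · linarith
  · linarith
end

section
/- Assume the setting and hypotheses of the preceding Lemma A.6 bound: in particular, for every x ∈ 𝕏ᵈ, | φ^*(f_s(x)) − max_{y∈Y} (⟨y, f_s(x)⟩ − ϕ(y)) | ≤ γ·e_e + e_u + e_v + e_x + e_y, with e_y := (max_{x∈𝕏ᵈ} ‖f_s(x)‖ + M) · δ. Suppose in addition that Ê : 𝕏ᵈ → ℝ and e_z ≥ 0 satisfy 0 ≤ Ê(x) − max_{y∈Y} (⟨y, f_s(x)⟩ − ϕ(y)) ≤ e_z for every x ∈ 𝕏ᵈ. Then for every x ∈ 𝕏ᵈ, | Ê(x) − φ^*(f_s(x)) | ≤ γ·e_e + e_u + e_v + e_x + e_y + e_z. Equivalently, with T̂ᵈ Jᵈ(x) := C_s(x) + Ê(x) and T̂ J(x) := C_s(x) + φ^*(f_s(x)) for any C_s : ℝⁿ → ℝ, the discrete CDP output satisfies max_{x∈𝕏ᵈ} |T̂ᵈ Jᵈ(x) − T̂ J(x)| ≤ γ·e_e + e_u + e_v + e_x + e_y + e_z. -/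
open scoped RealInnerProductSpace

/-- Lemma A.7: the error of the discrete conjugate DP operator (whose last step `Ê` is
the interpolative extension of the discrete conjugate of `ϕ` evaluated at `f_s(x)`,
satisfying the `e_z` over-approximation property) relative to the exact CDP operator is
bounded by `γ·e_e + e_u + e_v + e_x + e_y + e_z`, given the Lemma A.6 bound
`|φ*(f_s(x)) − max_{y∈Y}(⟨y,f_s(x)⟩ − ϕ(y))| ≤ γ·e_e + e_u + e_v + e_x + e_y` with
`e_y = (max_{x∈𝕏ᵈ}‖f_s(x)‖ + M)·δ`. -/
theorem dCDP_operator_error {n : ℕ}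
    (Xd Y : Finset (EuclideanSpace ℝ (Fin n))) (hXd : Xd.Nonempty) (hY : Y.Nonempty)
    (fs : EuclideanSpace ℝ (Fin n) → EuclideanSpace ℝ (Fin n))
    (φ ϕd : EuclideanSpace ℝ (Fin n) → ℝ)
    (γ e_e e_u e_v e_x M δ e_y : ℝ)
    (hey : e_y = (Xd.sup' hXd (fun x => ‖fs x‖) + M) * δ)
    (hA6 : ∀ x ∈ Xd,
      |sSup (Set.range fun y => ⟪y, fs x⟫ - φ y) -
          Y.sup' hY (fun y => ⟪y, fs x⟫ - ϕd y)| ≤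
        γ * e_e + e_u + e_v + e_x + e_y)
    (Ehat : EuclideanSpace ℝ (Fin n) → ℝ) (e_z : ℝ) (hez : 0 ≤ e_z)
    (hE : ∀ x ∈ Xd,
      0 ≤ Ehat x - Y.sup' hY (fun y => ⟪y, fs x⟫ - ϕd y) ∧
      Ehat x - Y.sup' hY (fun y => ⟪y, fs x⟫ - ϕd y) ≤ e_z) :
    (∀ x ∈ Xd,
      |Ehat x - sSup (Set.range fun y => ⟪y, fs x⟫ - φ y)| ≤
        γ * e_e + e_u + e_v + e_x + e_y + e_z) ∧
    ∀ Cs : EuclideanSpace ℝ (Fin n) → ℝ,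
      Xd.sup' hXd (fun x =>
          |(Cs x + Ehat x) - (Cs x + sSup (Set.range fun y => ⟪y, fs x⟫ - φ y))|) ≤
        γ * e_e + e_u + e_v + e_x + e_y + e_z := by
  have key : ∀ x ∈ Xd,
      |Ehat x - sSup (Set.range fun y => ⟪y, fs x⟫ - φ y)| ≤
        γ * e_e + e_u + e_v + e_x + e_y + e_z := by
    intro x hx
    obtain ⟨h1, h2⟩ := hE x hx
    have h3 := hA6 x hx
    have := abs_sub_abs_le_abs_sub (Ehat x - Y.sup' hY (fun y => ⟪y, fs x⟫ - ϕd y))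
      (sSup (Set.range fun y => ⟪y, fs x⟫ - φ y) - Y.sup' hY (fun y => ⟪y, fs x⟫ - ϕd y))
    calc |Ehat x - sSup (Set.range fun y => ⟪y, fs x⟫ - φ y)|
        ≤ |Ehat x - Y.sup' hY (fun y => ⟪y, fs x⟫ - ϕd y)| +
          |sSup (Set.range fun y => ⟪y, fs x⟫ - φ y) - Y.sup' hY (fun y => ⟪y, fs x⟫ - ϕd y)| := by
          rw [abs_sub_comm (sSup _)]
          exact abs_sub_le _ _ _
      _ ≤ e_z + (γ * e_e + e_u + e_v + e_x + e_y) := by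
          have : |Ehat x - Y.sup' hY (fun y => ⟪y, fs x⟫ - ϕd y)| ≤ e_z := abs_le.2 ⟨by linarith, h2⟩
          have h4 : |sSup (Set.range fun y => ⟪y, fs x⟫ - φ y) - Y.sup' hY (fun y => ⟪y, fs x⟫ - ϕd y)| ≤ γ * e_e + e_u + e_v + e_x + e_y := h3
          linarith
      _ = γ * e_e + e_u + e_v + e_x + e_y + e_z := by ring
  refine ⟨key, fun Cs => ?_⟩
  apply Finset.sup'_le
  intro x hx
  have := key x hx
  have heq : (Cs x + Ehat x) - (Cs x + sSup (Set.range fun y => ⟪y, fs x⟫ - φ y))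
      = Ehat x - sSup (Set.range fun y => ⟪y, fs x⟫ - φ y) := by ring
  rw [heq]
  exact this
end

section
/- Let 𝕏 ⊆ ℝⁿ be a nonempty compact set, 𝕏ᵈ ⊆ 𝕏 a nonempty finite subset, h : ℝⁿ → ℝ continuous and Lipschitz on 𝕏 with constant K ≥ 0, and y ∈ ℝⁿ. Then 0 ≤ max_{x∈𝕏} (⟨x, y⟩ − h(x)) − max_{x∈𝕏ᵈ} (⟨x, y⟩ − h(x)) ≤ (‖y‖ + K) · d⃗(𝕏, 𝕏ᵈ). -/
open scoped RealInnerProductSpace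

/-- The conjugate-discretization error inequality (steps (Z1-1) and (Z3) of Lemma A.5):
replacing the conjugation domain `𝕏` by a finite subset `𝕏ᵈ` under-approximates the
conjugate by at most `(‖y‖ + K) · d⃗(𝕏, 𝕏ᵈ)`, where `d⃗` is the one-sided Hausdorff
distance and `K` is a Lipschitz constant of `h` on `𝕏`. -/
theorem discrete_conjugate_error {n : ℕ}
    (X : Set (EuclideanSpace ℝ (Fin n))) (hXne : X.Nonempty) (hXc : IsCompact X)
    (Xd : Finset (EuclideanSpace ℝ (Fin n))) (hXdne : Xd.Nonempty)
    (hXdsub : (↑Xd : Set (EuclideanSpace ℝ (Fin n))) ⊆ X)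
    (h : EuclideanSpace ℝ (Fin n) → ℝ) (hh : Continuous h)
    (K : ℝ) (hK : 0 ≤ K)
    (hLip : ∀ x ∈ X, ∀ x' ∈ X, |h x - h x'| ≤ K * ‖x - x'‖)
    (y : EuclideanSpace ℝ (Fin n)) :
    0 ≤ sSup ((fun x => ⟪x, y⟫ - h x) '' X) - Xd.sup' hXdne (fun x => ⟪x, y⟫ - h x) ∧
      sSup ((fun x => ⟪x, y⟫ - h x) '' X) - Xd.sup' hXdne (fun x => ⟪x, y⟫ - h x) ≤
        (‖y‖ + K) * sSup ((fun x => Metric.infDist x (↑Xd : Set (EuclideanSpace ℝ (Fin n)))) '' X) := by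
  set f : EuclideanSpace ℝ (Fin n) → ℝ := fun x => ⟪x, y⟫ - h x with hf
  have hfc : Continuous f := ((continuous_id.inner continuous_const)).sub hh
  have hbdd : BddAbove (f '' X) := (hXc.image hfc).bddAbove
  have hsup'le : Xd.sup' hXdne f ≤ sSup (f '' X) := by
    apply Finset.sup'_le
    intro x hx
    exact le_csSup hbdd ⟨x, hXdsub hx, rfl⟩
  obtain ⟨xs, hxs, hxseq⟩ := hXc.exists_sSup_image_eq hXne hfc.continuousOn
  obtain ⟨xd, hxd, hxdeq⟩ := Xd.finite_toSet.isCompact.exists_infDist_eq_dist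
    (hXdne.to_set) xs
  have hg : Continuous fun x => Metric.infDist x (↑Xd : Set (EuclideanSpace ℝ (Fin n))) :=
    Metric.continuous_infDist_pt _
  have hgbdd : BddAbove ((fun x => Metric.infDist x (↑Xd : Set _)) '' X) :=
    (hXc.image hg).bddAbove
  have hinf_le : Metric.infDist xs (↑Xd : Set _) ≤
      sSup ((fun x => Metric.infDist x (↑Xd : Set _)) '' X) :=
    le_csSup hgbdd ⟨xs, hxs, rfl⟩
  constructor
  · linarith
  · have hxdX : xd ∈ X := hXdsub hxd
    have h1 : f xd ≤ Xd.sup' hXdne f := Finset.le_sup' f hxd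
    have h2 : f xs - f xd ≤ (‖y‖ + K) * dist xs xd := by
      have : f xs - f xd = ⟪xs - xd, y⟫ + (h xd - h xs) := by
        simp [hf, inner_sub_left]; ring
      rw [this]
      have hi : ⟪xs - xd, y⟫ ≤ ‖xs - xd‖ * ‖y‖ := real_inner_le_norm _ _
      have hl : h xd - h xs ≤ K * ‖xd - xs‖ := le_trans (le_abs_self _) (hLip xd hxdX xs hxs)
      rw [dist_eq_norm]
      have : ‖xd - xs‖ = ‖xs - xd‖ := norm_sub_rev _ _
      nlinarith [norm_nonneg (xs - xd)]
    have := hxseq ▸ h2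
    calc sSup (f '' X) - Xd.sup' hXdne f ≤ f xs - f xd := by
          rw [hxseq]; linarith
      _ ≤ (‖y‖ + K) * dist xs xd := h2
      _ = (‖y‖ + K) * Metric.infDist xs (↑Xd : Set _) := by rw [hxdeq]
      _ ≤ (‖y‖ + K) * sSup ((fun x => Metric.infDist x (↑Xd : Set _)) '' X) := by
          apply mul_le_mul_of_nonneg_left hinf_le
          positivity
end
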